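/- arXiv:2409.09498 — 5 statements merged into one kernel-verified Lean document; each statement's English description precedes it below -/
import Mathlib

section
/- Let M_n = max(Δ_1, …, Δ_n). Then for any r > 0 and 0 < α ≤ 1, sup_{n ≥ 1} E[((M_n + 1)/b_n)^{-r}] < ∞. -/
open MeasureTheory ProbabilityTheory Filter Set Topology
open scoped ENNReal ProbabilityTheory

/-!
Write `T x = P(Δ ≥ x)`. Being regularly varying of index `-α`, `T` satisfies the Potter-type bound
`q T(2x) ≤ T(x)` for large `x`, with `q = 2^(α/2) > 1`. A dyadic layer-cake decomposition gives
`E[((Mₙ + 1)/bₙ)^(-r)] ≤ 1 + ∑ₖ 2^(r(k+1)) P(Mₙ + 1 ≤ bₙ/2^k)`, and by independence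
`P(Mₙ + 1 ≤ y) ≤ exp(-n T(y))`. Since `n T(bₙ) ≥ 1`, iterating the Potter bound gives
`n T(bₙ/2^k) ≥ q^k` while `bₙ/2^k` stays above the threshold; below it `n T(bₙ/2^k)` is of order
`n`, which dominates `q^k` because `q^k T(2^k)` is bounded. So the `k`-th term is at most
`2^(r(k+1)) exp(-c q^k)`, which is summable and independent of `n`.
-/

section RegularVariation

variable {T : ℝ → ℝ}

theorem tendsto_div_comp_mul_of_slowlyVarying {ℓ : ℝ → ℝ} {α : ℝ}
    (hslow : ∀ lam : ℝ, 0 < lam → Tendsto (fun x => ℓ (lam * x) / ℓ x) atTop (𝓝 1))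
    (htail : ∀ x : ℝ, 1 ≤ x → T x = x ^ (-α) * ℓ x) {lam : ℝ} (hlam : 0 < lam) :
    Tendsto (fun x => T (lam * x) / T x) atTop (𝓝 (lam ^ (-α))) := by
  have h := (hslow lam hlam).const_mul (lam ^ (-α))
  rw [mul_one] at h
  refine h.congr' ?_
  filter_upwards [eventually_ge_atTop 1, eventually_ge_atTop lam⁻¹] with x hx hxl
  have hx0 : 0 < x := by linarith
  have hlx : 1 ≤ lam * x := by rwa [inv_le_iff_one_le_mul₀' hlam] at hxl
  have hxα : x ^ (-α) ≠ 0 := (Real.rpow_pos_of_pos hx0 _).ne'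
  rw [htail x hx, htail _ hlx, Real.mul_rpow hlam.le hx0.le, mul_assoc, mul_div_assoc,
    mul_div_mul_left _ _ hxα]

theorem pos_of_tendsto_div_comp_mul (hanti : Antitone T) (hT0 : ∀ x, 0 ≤ T x) {lam L : ℝ}
    (hL : L ≠ 0) (h : Tendsto (fun x => T (lam * x) / T x) atTop (𝓝 L)) (x : ℝ) : 0 < T x := by
  obtain ⟨y, hy, hxy⟩ := ((h.eventually_ne hL).and (eventually_ge_atTop x)).exists
  have hTy : T y ≠ 0 := fun h0 => hy (by rw [h0, div_zero])
  exact ((hT0 y).lt_of_ne hTy.symm).trans_le (hanti hxy)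

theorem eventually_mul_le_of_tendsto_div (hpos : ∀ x, 0 < T x) {L q : ℝ} (hq : 0 < q)
    (hLq : L < q⁻¹) (h : Tendsto (fun x => T (2 * x) / T x) atTop (𝓝 L)) :
    ∀ᶠ x in atTop, q * T (2 * x) ≤ T x := by
  filter_upwards [h.eventually (eventually_le_nhds hLq)] with x hx
  rw [div_le_iff₀ (hpos x)] at hx
  calc q * T (2 * x) ≤ q * (q⁻¹ * T x) := by gcongr
    _ = T x := by field_simp

variable {q X : ℝ}

theorem pow_mul_le_of_forall_ge (hq : 0 ≤ q) (hX : 0 ≤ X)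
    (h : ∀ x, X ≤ x → q * T (2 * x) ≤ T x) (k : ℕ) {x : ℝ} (hx : X ≤ x) :
    q ^ k * T (2 ^ k * x) ≤ T x := by
  induction k with
  | zero => simp
  | succ k ih =>
    have hxk : X ≤ 2 ^ k * x :=
      hx.trans (le_mul_of_one_le_left (hX.trans hx) (one_le_pow₀ one_le_two))
    calc q ^ (k + 1) * T (2 ^ (k + 1) * x) = q ^ k * (q * T (2 * (2 ^ k * x))) := by ring_nf
      _ ≤ q ^ k * T (2 ^ k * x) := by gcongr; exact h _ hxk
      _ ≤ T x := ih

theorem exists_pow_mul_le (hanti : Antitone T) (hpos : ∀ x, 0 < T x) (hq : 1 ≤ q) (hX : 0 ≤ X)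
    (h : ∀ x, X ≤ x → q * T (2 * x) ≤ T x) :
    ∃ C, 0 < C ∧ ∀ k : ℕ, q ^ k * T (2 ^ k) ≤ C := by
  obtain ⟨m, hm⟩ := pow_unbounded_of_one_lt X one_lt_two
  have hT1 := hpos 1
  refine ⟨q ^ m * T 1, by positivity, fun k => ?_⟩
  rcases le_total k m with hkm | hmk
  · exact mul_le_mul (pow_le_pow_right₀ hq hkm) (hanti (one_le_pow₀ one_le_two)) (hpos _).le
      (by positivity)
  · obtain ⟨j, rfl⟩ := Nat.exists_eq_add_of_le hmk
    calc q ^ (m + j) * T (2 ^ (m + j)) = q ^ m * (q ^ j * T (2 ^ j * 2 ^ m)) := by ring_nf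
      _ ≤ q ^ m * T (2 ^ m) := by
          gcongr; exact pow_mul_le_of_forall_ge (by linarith) hX h j hm.le
      _ ≤ q ^ m * T 1 := by gcongr; exact hanti (one_le_pow₀ one_le_two)

theorem exists_mul_pow_le_mul_div_pow (hanti : Antitone T) (hpos : ∀ x, 0 < T x) (hq : 1 ≤ q)
    (hX : 0 ≤ X) (h : ∀ x, X ≤ x → q * T (2 * x) ≤ T x) :
    ∃ c, 0 < c ∧ ∀ n b : ℝ, 1 ≤ n * T b → ∀ k : ℕ, (2 : ℝ) ^ k ≤ b →
      c * q ^ k ≤ n * T (b / 2 ^ k) := by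
  obtain ⟨C, hC, hCk⟩ := exists_pow_mul_le hanti hpos hq hX h
  have hTX := hpos X
  refine ⟨min 1 (T X / C), by positivity, fun n b hnb k hkb => ?_⟩
  have hn : 0 < n := pos_of_mul_pos_left (one_pos.trans_le hnb) (hpos b).le
  have hqk : q ^ k ≤ n * (q ^ k * T b) := by
    calc q ^ k = q ^ k * 1 := (mul_one _).symm
      _ ≤ q ^ k * (n * T b) := by gcongr
      _ = n * (q ^ k * T b) := by ring
  by_cases hXb : X ≤ b / 2 ^ k
  · have hpot := pow_mul_le_of_forall_ge (by linarith) hX h k hXb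
    rw [mul_div_cancel₀ _ (by positivity)] at hpot
    calc min 1 (T X / C) * q ^ k ≤ 1 * q ^ k := by gcongr; exact min_le_left _ _
      _ ≤ n * T (b / 2 ^ k) := by rw [one_mul]; exact hqk.trans (by gcongr)
  · have hqkC : q ^ k ≤ C * n :=
      calc q ^ k ≤ n * (q ^ k * T (2 ^ k)) := hqk.trans (by gcongr; exact hanti hkb)
        _ ≤ n * C := by gcongr; exact hCk k
        _ = C * n := mul_comm _ _
    calc min 1 (T X / C) * q ^ k ≤ T X / C * (C * n) := by
          gcongr
          · exact min_le_right _ _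
      _ = n * T X := by field_simp
      _ ≤ n * T (b / 2 ^ k) := by gcongr; exact hanti (not_le.mp hXb).le

theorem exists_mul_pow_le_mul_div_pow_of_slowlyVarying (hanti : Antitone T) (hT0 : ∀ x, 0 ≤ T x)
    {ℓ : ℝ → ℝ} {α : ℝ} (hα : 0 < α)
    (hslow : ∀ lam : ℝ, 0 < lam → Tendsto (fun x => ℓ (lam * x) / ℓ x) atTop (𝓝 1))
    (htail : ∀ x : ℝ, 1 ≤ x → T x = x ^ (-α) * ℓ x) :
    ∃ c q : ℝ, 0 < c ∧ 1 < q ∧ ∀ n b : ℝ, 1 ≤ n * T b → ∀ k : ℕ, (2 : ℝ) ^ k ≤ b →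
      c * q ^ k ≤ n * T (b / 2 ^ k) := by
  have hreg : Tendsto (fun x => T (2 * x) / T x) atTop (𝓝 (2 ^ (-α))) :=
    tendsto_div_comp_mul_of_slowlyVarying hslow htail two_pos
  have hpos : ∀ x, 0 < T x := pos_of_tendsto_div_comp_mul hanti hT0 (by positivity) hreg
  have hq : 1 < (2 : ℝ) ^ (α / 2) := Real.one_lt_rpow one_lt_two (by positivity)
  have hqinv : (2 : ℝ) ^ (-α) < ((2 : ℝ) ^ (α / 2))⁻¹ := by
    rw [← Real.rpow_neg zero_le_two]
    exact Real.rpow_lt_rpow_of_exponent_lt one_lt_two (by linarith)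
  obtain ⟨X, hX⟩ :=
    (eventually_mul_le_of_tendsto_div hpos (by positivity) hqinv hreg).exists_forall_of_atTop
  obtain ⟨c, hc, hdecay⟩ := exists_mul_pow_le_mul_div_pow hanti hpos hq.le (le_max_right X 0)
    fun x hx => hX x ((le_max_left X 0).trans hx)
  exact ⟨c, _, hc, hq, hdecay⟩

end RegularVariation

theorem summable_pow_mul_exp_neg_mul_pow (ρ : ℝ) {c q : ℝ} (hc : 0 < c) (hq : 1 < q) :
    Summable fun k : ℕ => ρ ^ k * Real.exp (-(c * q ^ k)) := by
  set ratio : ℕ → ℝ := fun k => |ρ| * Real.exp (-(c * (q - 1) * q ^ k))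
  have hratio : Tendsto ratio atTop (𝓝 0) := by
    have hgrow : Tendsto (fun k : ℕ => c * (q - 1) * q ^ k) atTop atTop :=
      (tendsto_pow_atTop_atTop_of_one_lt hq).const_mul_atTop (by nlinarith)
    simpa using (Real.tendsto_exp_neg_atTop_nhds_zero.comp hgrow).const_mul |ρ|
  refine summable_of_ratio_norm_eventually_le (r := 1 / 2) (by norm_num) ?_
  filter_upwards [hratio.eventually (eventually_le_nhds (by norm_num : (0 : ℝ) < 1 / 2))]
    with k hk
  have hsplit : -(c * q ^ (k + 1)) = -(c * q ^ k) + -(c * (q - 1) * q ^ k) := by ring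
  rw [norm_mul, norm_mul, pow_succ, norm_mul, hsplit, Real.exp_add, norm_mul]
  calc ‖ρ ^ k‖ * ‖ρ‖ * (‖Real.exp (-(c * q ^ k))‖ * ‖Real.exp (-(c * (q - 1) * q ^ k))‖)
      = ratio k * (‖ρ ^ k‖ * ‖Real.exp (-(c * q ^ k))‖) := by
        simp only [ratio, Real.norm_eq_abs, abs_of_pos (Real.exp_pos _)]; ring
    _ ≤ 1 / 2 * (‖ρ ^ k‖ * ‖Real.exp (-(c * q ^ k))‖) := by gcongr

theorem ofReal_rpow_le_one_add_tsum_indicator {a z r : ℝ} (ha : 1 < a) (hz : 0 ≤ z)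
    (hr : 0 ≤ r) :
    ENNReal.ofReal (z ^ r) ≤
      1 + ∑' k : ℕ, (Ici (a ^ k)).indicator (fun _ => ENNReal.ofReal ((a ^ r) ^ (k + 1))) z := by
  rcases lt_or_ge z 1 with hz1 | hz1
  · exact (ENNReal.ofReal_le_one.2 (Real.rpow_le_one hz hz1.le hr)).trans le_self_add
  · obtain ⟨k, hkz, hzk⟩ := exists_nat_pow_near hz1 ha
    calc ENNReal.ofReal (z ^ r) ≤ ENNReal.ofReal ((a ^ r) ^ (k + 1)) := by
          rw [Real.rpow_pow_comm (by linarith)]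
          gcongr
      _ = (Ici (a ^ k)).indicator (fun _ => ENNReal.ofReal ((a ^ r) ^ (k + 1))) z :=
          (indicator_of_mem (mem_Ici.mpr hkz) (fun _ => _)).symm
      _ ≤ _ := ENNReal.le_tsum k
      _ ≤ _ := le_add_self

theorem rpow_neg_div_le_abs_rpow {x r : ℝ} (hx : 1 ≤ x) (hr : 0 ≤ r) (b : ℝ) :
    (x / b) ^ (-r) ≤ |b| ^ r :=
  calc (x / b) ^ (-r) ≤ |x / b| ^ (-r) := (le_abs_self _).trans (Real.abs_rpow_le_abs_rpow _ _)
    _ = (|b| / x) ^ r := by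
        rw [Real.rpow_neg (abs_nonneg _), ← Real.inv_rpow (abs_nonneg _), abs_div,
          abs_of_pos (by linarith), inv_div]
    _ ≤ |b| ^ r := by gcongr; exact div_le_self (abs_nonneg _) hx

section Probability

variable {Ω : Type*} [MeasurableSpace Ω] {μ : Measure Ω}

theorem lintegral_ofReal_rpow_le_one_add_tsum [IsProbabilityMeasure μ] {Z : Ω → ℝ}
    (hZ : Measurable Z) (hZ0 : ∀ ω, 0 ≤ Z ω) {a r : ℝ} (ha : 1 < a) (hr : 0 ≤ r) :
    ∫⁻ ω, ENNReal.ofReal (Z ω ^ r) ∂μ ≤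
      1 + ∑' k : ℕ, ENNReal.ofReal ((a ^ r) ^ (k + 1)) * μ {ω | a ^ k ≤ Z ω} := by
  set w : ℕ → ℝ≥0∞ := fun k => ENNReal.ofReal ((a ^ r) ^ (k + 1))
  calc ∫⁻ ω, ENNReal.ofReal (Z ω ^ r) ∂μ
      ≤ ∫⁻ ω, 1 + ∑' k : ℕ, (Z ⁻¹' Ici (a ^ k)).indicator (fun _ => w k) ω ∂μ :=
        lintegral_mono fun ω => ofReal_rpow_le_one_add_tsum_indicator ha (hZ0 ω) hr
    _ = 1 + ∑' k : ℕ, w k * μ {ω | a ^ k ≤ Z ω} := by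
        rw [lintegral_add_left measurable_const, lintegral_one, measure_univ,
          lintegral_tsum fun k => (measurable_const.indicator (hZ measurableSet_Ici)).aemeasurable]
        congr 1
        exact tsum_congr fun k => lintegral_indicator_const (hZ measurableSet_Ici) _

theorem measure_le_le_ofReal_one_sub [IsProbabilityMeasure μ] {f : Ω → ℝ} (hf : Measurable f)
    {a c : ℝ} (hac : a < c) :
    μ {ω | f ω ≤ a} ≤ ENNReal.ofReal (1 - μ.real {ω | c ≤ f ω}) :=
  calc μ {ω | f ω ≤ a} ≤ μ {ω | c ≤ f ω}ᶜ :=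
        measure_mono fun ω hω => not_le.mpr (lt_of_le_of_lt hω hac)
    _ = 1 - μ {ω | c ≤ f ω} := prob_compl_eq_one_sub (hf measurableSet_Ici)
    _ = ENNReal.ofReal (1 - μ.real {ω | c ≤ f ω}) := by
        rw [ENNReal.ofReal_sub _ measureReal_nonneg, ENNReal.ofReal_one, ofReal_measureReal]

theorem one_sub_measureReal_le_le_measureReal_ge [IsProbabilityMeasure μ] (f : Ω → ℝ) (c : ℝ) :
    1 - μ.real {ω | f ω ≤ c} ≤ μ.real {ω | c ≤ f ω} := by
  have hcover : {ω | f ω ≤ c} ∪ {ω | c ≤ f ω} = univ :=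
    eq_univ_of_forall fun ω => le_total (f ω) c
  have := measureReal_union_le (μ := μ) {ω | f ω ≤ c} {ω | c ≤ f ω}
  rw [hcover, probReal_univ] at this
  linarith

theorem one_le_mul_measureReal_ge_of_quantile [IsProbabilityMeasure μ] {f : Ω → ℝ} {b n : ℝ}
    (hb : (μ {ω | f ω ≤ b}).toReal = 1 - 1 / n) (hn : 0 < n) :
    1 ≤ n * μ.real {ω | b ≤ f ω} := by
  have := one_sub_measureReal_le_le_measureReal_ge (μ := μ) f b
  rw [measureReal_def, hb] at this
  rw [← div_le_iff₀' hn]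
  linarith

theorem eq_one_of_quantile_nonpos {f : Ω → ℝ} (hf : ∀ ω, 0 < f ω) {b : ℝ} {n : ℕ}
    (hb : (μ {ω | f ω ≤ b}).toReal = 1 - 1 / n) (hb0 : b ≤ 0) : n = 1 := by
  have hempty : {ω | f ω ≤ b} = ∅ :=
    eq_empty_of_forall_notMem fun ω hω => (hb0.trans_lt (hf ω)).not_ge hω
  rw [hempty, measure_empty, ENNReal.toReal_zero, one_div] at hb
  have hinv : (n : ℝ)⁻¹ = 1 := by linarith
  exact_mod_cast inv_eq_one.mp hinv

variable {Δ : ℕ → Ω → ℝ}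

theorem measure_iSup_le_eq_pow (hindep : iIndepFun Δ μ)
    (hident : ∀ i, IdentDistrib (Δ i) (Δ 0) μ μ) {n : ℕ} (hn : n ≠ 0) (c : ℝ) :
    μ {ω | ⨆ i : Fin n, Δ i ω ≤ c} = μ {ω | Δ 0 ω ≤ c} ^ n := by
  have : NeZero n := ⟨hn⟩
  have hset : {ω | ⨆ i : Fin n, Δ i ω ≤ c} = ⋂ i ∈ Finset.range n, Δ i ⁻¹' Iic c := by
    ext ω
    simp [ciSup_le_iff (finite_range _).bddAbove, Fin.forall_iff]
  rw [hset, hindep.meas_biInter fun i _ => ⟨Iic c, measurableSet_Iic, rfl⟩,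
    Finset.prod_congr rfl fun i _ => (hident i).measure_mem_eq measurableSet_Iic]
  simp [preimage, Iic]

theorem measure_iSup_le_sub_one_le_exp [IsProbabilityMeasure μ] (hmeas : Measurable (Δ 0))
    (hindep : iIndepFun Δ μ) (hident : ∀ i, IdentDistrib (Δ i) (Δ 0) μ μ) {n : ℕ} (hn : n ≠ 0)
    (y : ℝ) :
    μ {ω | ⨆ i : Fin n, Δ i ω ≤ y - 1} ≤
      ENNReal.ofReal (Real.exp (-(n * μ.real {ω | y ≤ Δ 0 ω}))) := by
  rw [measure_iSup_le_eq_pow hindep hident hn]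
  calc μ {ω | Δ 0 ω ≤ y - 1} ^ n ≤ ENNReal.ofReal (1 - μ.real {ω | y ≤ Δ 0 ω}) ^ n :=
        pow_le_pow_left' (measure_le_le_ofReal_one_sub hmeas (by linarith)) n
    _ ≤ ENNReal.ofReal (Real.exp (-μ.real {ω | y ≤ Δ 0 ω})) ^ n :=
        pow_le_pow_left' (ENNReal.ofReal_le_ofReal (Real.one_sub_le_exp_neg _)) n
    _ = _ := by rw [← ENNReal.ofReal_pow (Real.exp_nonneg _), ← Real.exp_nat_mul, mul_neg]

theorem lintegral_rpow_neg_iSup_le_abs_rpow [IsProbabilityMeasure μ]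
    (hnonneg : ∀ i ω, 0 ≤ Δ i ω) (n : ℕ) (b : ℝ) {r : ℝ} (hr : 0 ≤ r) :
    ∫⁻ ω, ENNReal.ofReal ((((⨆ i : Fin n, Δ i ω) + 1) / b) ^ (-r)) ∂μ ≤
      ENNReal.ofReal (|b| ^ r) :=
  lintegral_le_const <| ae_of_all _ fun ω => ENNReal.ofReal_le_ofReal <|
    rpow_neg_div_le_abs_rpow
      (le_add_of_nonneg_left (Real.iSup_nonneg fun i : Fin n => hnonneg i ω)) hr b

theorem lintegral_rpow_neg_iSup_le [IsProbabilityMeasure μ] (hmeas : ∀ i, Measurable (Δ i))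
    (hindep : iIndepFun Δ μ) (hident : ∀ i, IdentDistrib (Δ i) (Δ 0) μ μ)
    (hnonneg : ∀ i ω, 0 ≤ Δ i ω) {n : ℕ} (hn : n ≠ 0) {b r c q : ℝ} (hb : 0 < b) (hr : 0 ≤ r)
    (hdecay : ∀ k : ℕ, (2 : ℝ) ^ k ≤ b → c * q ^ k ≤ n * μ.real {ω | b / 2 ^ k ≤ Δ 0 ω}) :
    ∫⁻ ω, ENNReal.ofReal ((((⨆ i : Fin n, Δ i ω) + 1) / b) ^ (-r)) ∂μ ≤
      1 + ∑' k : ℕ, ENNReal.ofReal ((2 ^ r) ^ (k + 1) * Real.exp (-(c * q ^ k))) := by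
  set M : Ω → ℝ := fun ω => ⨆ i : Fin n, Δ i ω
  have hM : ∀ ω, 1 ≤ M ω + 1 := fun ω =>
    le_add_of_nonneg_left (Real.iSup_nonneg fun i : Fin n => hnonneg i ω)
  have hMmeas : Measurable M := Measurable.iSup fun i => hmeas i
  have hflip : ∀ ω, (((⨆ i : Fin n, Δ i ω) + 1) / b) ^ (-r) = (b / (M ω + 1)) ^ r := fun ω => by
    have := hM ω
    rw [Real.rpow_neg (by positivity), ← Real.inv_rpow (by positivity), inv_div]
  simp_rw [hflip]
  refine (lintegral_ofReal_rpow_le_one_add_tsum (by fun_prop) (fun ω => ?_) one_lt_two hr).trans ?_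
  · have := hM ω; positivity
  gcongr with k
  rw [ENNReal.ofReal_mul (by positivity)]
  gcongr
  by_cases hkb : (2 : ℝ) ^ k ≤ b
  · have hevent : {ω | (2 : ℝ) ^ k ≤ b / (M ω + 1)} = {ω | M ω ≤ b / 2 ^ k - 1} := by
      ext ω
      have := hM ω
      simp only [mem_ofPred_eq]
      rw [le_div_iff₀ (by positivity), le_sub_iff_add_le, le_div_iff₀ (by positivity), mul_comm]
    rw [hevent]
    exact (measure_iSup_le_sub_one_le_exp (hmeas 0) hindep hident hn _).trans <|
      ENNReal.ofReal_le_ofReal <| Real.exp_le_exp.mpr <| neg_le_neg <| hdecay k hkb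
  · have hempty : {ω | (2 : ℝ) ^ k ≤ b / (M ω + 1)} = ∅ :=
      eq_empty_of_forall_notMem fun ω hω => hkb (hω.trans (div_le_self hb.le (hM ω)))
    simp [hempty]

end Probability

theorem stmt0_general {Ω : Type*} [MeasureSpace Ω] [IsProbabilityMeasure (ℙ : Measure Ω)]
    (Δ : ℕ → Ω → ℝ) (hmeas : ∀ i, Measurable (Δ i))
    (hindep : iIndepFun Δ ℙ)
    (hident : ∀ i, IdentDistrib (Δ i) (Δ 0) ℙ ℙ)
    (hpos : ∀ i ω, 0 < Δ i ω)
    (α : ℝ) (hα0 : 0 < α)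
    (ℓ : ℝ → ℝ)
    (hslow : ∀ lam : ℝ, 0 < lam → Tendsto (fun x => ℓ (lam * x) / ℓ x) atTop (𝓝 1))
    (htail : ∀ x : ℝ, 1 ≤ x → (ℙ {ω | x ≤ Δ 0 ω}).toReal = x ^ (-α) * ℓ x)
    (b : ℕ → ℝ)
    (hb : ∀ n : ℕ, 1 ≤ n → (ℙ {ω | Δ 0 ω ≤ b n}).toReal = 1 - 1 / n)
    (r : ℝ) (hr : 0 < r) :
    ∃ C : ℝ≥0∞, C < ⊤ ∧ ∀ n : ℕ, 1 ≤ n →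
      ∫⁻ ω, ENNReal.ofReal ((((⨆ i : Fin n, Δ i ω) + 1) / b n) ^ (-r)) ∂ℙ ≤ C := by
  have hnonneg : ∀ i ω, 0 ≤ Δ i ω := fun i ω => (hpos i ω).le
  obtain ⟨c, q, hc, hq, hdecay⟩ := exists_mul_pow_le_mul_div_pow_of_slowlyVarying
    (T := fun x => (ℙ : Measure Ω).real {ω | x ≤ Δ 0 ω})
    (fun x y hxy => measureReal_mono fun ω hω => hxy.trans hω) (fun _ => measureReal_nonneg)
    hα0 hslow htail
  set S : ℝ≥0∞ := ∑' k : ℕ, ENNReal.ofReal ((2 ^ r) ^ (k + 1) * Real.exp (-(c * q ^ k)))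
    with hSdef
  have hS : S ≠ ⊤ := by
    have hsum : Summable fun k : ℕ => (2 ^ r) ^ (k + 1) * Real.exp (-(c * q ^ k)) :=
      ((summable_pow_mul_exp_neg_mul_pow (2 ^ r) hc hq).mul_left (2 ^ r)).congr fun k => by ring
    rw [hSdef, ← ENNReal.ofReal_tsum_of_nonneg (fun k => by positivity) hsum]
    exact ENNReal.ofReal_ne_top
  refine ⟨max (1 + S) (ENNReal.ofReal (|b 1| ^ r)), max_lt (by finiteness) ENNReal.ofReal_lt_top,
    fun n hn => ?_⟩
  rcases lt_or_ge 0 (b n) with hbn | hbn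
  · have hnT := one_le_mul_measureReal_ge_of_quantile (hb n hn) (by exact_mod_cast hn)
    exact (lintegral_rpow_neg_iSup_le hmeas hindep hident hnonneg (by omega) hbn hr.le
      fun k hkb => hdecay n (b n) hnT k hkb).trans (le_max_left _ _)
  · obtain rfl : n = 1 := eq_one_of_quantile_nonpos (hpos 0) (hb n hn) hbn
    exact (lintegral_rpow_neg_iSup_le_abs_rpow hnonneg 1 (b 1) hr.le).trans (le_max_right _ _)

/-- Let `Δ 0, Δ 1, …` be i.i.d. positive random variables with
`P(Δ ≥ x) = x^{-α} ℓ(x)` for `x ≥ 1`, `0 < α ≤ 1`, `ℓ` slowly varying, and let `b n` be the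
quantile of order `1 - 1/n`. With `Mₙ = max(Δ 0, …, Δ (n-1))`, for any `r > 0`,
`sup_{n ≥ 1} E[((Mₙ + 1)/bₙ)^{-r}] < ∞`. -/
theorem stmt0 {Ω : Type*} [MeasureSpace Ω] [IsProbabilityMeasure (ℙ : Measure Ω)]
    (Δ : ℕ → Ω → ℝ) (hmeas : ∀ i, Measurable (Δ i))
    (hindep : iIndepFun Δ ℙ)
    (hident : ∀ i, IdentDistrib (Δ i) (Δ 0) ℙ ℙ)
    (hpos : ∀ i ω, 0 < Δ i ω)
    (α : ℝ) (hα0 : 0 < α) (hα1 : α ≤ 1)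
    (ℓ : ℝ → ℝ)
    (hslow : ∀ lam : ℝ, 0 < lam → Tendsto (fun x => ℓ (lam * x) / ℓ x) atTop (𝓝 1))
    (htail : ∀ x : ℝ, 1 ≤ x → (ℙ {ω | x ≤ Δ 0 ω}).toReal = x ^ (-α) * ℓ x)
    (b : ℕ → ℝ)
    (hb : ∀ n : ℕ, 1 ≤ n → (ℙ {ω | Δ 0 ω ≤ b n}).toReal = 1 - 1 / n)
    (r : ℝ) (hr : 0 < r) :
    ∃ C : ℝ≥0∞, C < ⊤ ∧ ∀ n : ℕ, 1 ≤ n →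
      ∫⁻ ω, ENNReal.ofReal ((((⨆ i : Fin n, Δ i ω) + 1) / b n) ^ (-r)) ∂ℙ ≤ C :=
  stmt0_general Δ hmeas hindep hident hpos α hα0 ℓ hslow htail b hb r hr
end

section
/- If α = 1 and E(Δ_1) = ∞, then (T_n/b_n) · (ℓ(b_n)/ℓ*(b_n)) converges to 1 in probability as n → ∞. -/
open MeasureTheory ProbabilityTheory Filter Set Topology
open scoped ENNReal ProbabilityTheory

/-!
Write `G x = P(x ≤ Δ₁)`, so that `ℓ x = x G x` and `ℓ* y = ∫₁^y G`. Slow variation of `ℓ` makes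
`G` regularly varying of index `-1`; as `G` is antitone, summing it over dyadic blocks gives
`ℓ(x)/ℓ*(x) → 0`, hence `ℓ*(Kx)/ℓ*(x) → 1`, and `E Δ₁ = ∞` gives `ℓ* → ∞`. By the layer-cake
formula the truncated mean `E min(Δ₁, s) = ∫₀^s G` is within `1` of `ℓ*(s)`, and the quantile
satisfies `n G(bₙ) → 1`.

Truncate the summands at `K bₙ`. Some `Δᵢ` is truncated with probability at most
`n G(K bₙ) → 1/K`. The truncated sum has mean `n E min(Δ₁, K bₙ) ~ n ℓ*(bₙ) ~ bₙ ℓ*(bₙ)/ℓ(bₙ)` and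
variance at most `n K bₙ E min(Δ₁, K bₙ)`, which is `o` of the squared mean because
`ℓ(bₙ)/ℓ*(bₙ) → 0`, so Chebyshev's inequality concludes once `K → ∞`.
-/

section RegularVariation

variable {G : ℝ → ℝ}

theorem tendsto_div_of_slowlyVarying {ℓ : ℝ → ℝ} (hℓ : ∀ x, 1 ≤ x → ℓ x = x * G x)
    (hslow : ∀ lam : ℝ, 0 < lam → Tendsto (fun x => ℓ (lam * x) / ℓ x) atTop (𝓝 1))
    {lam : ℝ} (hlam : 0 < lam) :
    Tendsto (fun x => G (lam * x) / G x) atTop (𝓝 lam⁻¹) := by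
  have h := (hslow lam hlam).const_mul lam⁻¹
  rw [mul_one] at h
  refine h.congr' ?_
  filter_upwards [eventually_ge_atTop 1, eventually_ge_atTop lam⁻¹] with x hx hxlam
  have hlamx : 1 ≤ lam * x := by rwa [← inv_mul_le_iff₀ hlam, mul_one]
  rw [hℓ x hx, hℓ _ hlamx]
  field_simp [(one_pos.trans_le hx).ne']

theorem intervalIntegral_div_eq_of_eq_mul {ℓ : ℝ → ℝ} (hℓ : ∀ x, 1 ≤ x → ℓ x = x * G x)
    {y : ℝ} (hy : 1 ≤ y) : ∫ x in (1:ℝ)..y, ℓ x / x = ∫ x in (1:ℝ)..y, G x := by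
  refine intervalIntegral.integral_congr fun x hx => ?_
  rw [uIcc_of_le hy] at hx
  rw [hℓ x hx.1, mul_div_cancel_left₀ _ (one_pos.trans_le hx.1).ne']

theorem pos_of_antitone_of_eventually_ne_zero (hG : Antitone G) (hG0 : ∀ x, 0 ≤ G x)
    (hne : ∀ᶠ x in atTop, G x ≠ 0) (x : ℝ) : 0 < G x := by
  obtain ⟨y, hy, hxy⟩ := (hne.and (eventually_ge_atTop x)).exists
  exact ((hG0 y).lt_of_ne' hy).trans_le (hG hxy)

theorem sum_le_intervalIntegral_of_antitone (hG : Antitone G) {x : ℝ} (hx : 0 ≤ x) (m : ℕ) :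
    ∑ k ∈ Finset.range m, x / 2 ^ (k + 1) * G (x / 2 ^ k) ≤ ∫ t in x / 2 ^ m..x, G t := by
  induction m with
  | zero => simp
  | succ m ih =>
    have hle : x / 2 ^ (m + 1) ≤ x / 2 ^ m := by gcongr <;> norm_num
    have hstep : (x / 2 ^ m - x / 2 ^ (m + 1)) * G (x / 2 ^ m)
        ≤ ∫ t in x / 2 ^ (m + 1)..x / 2 ^ m, G t := by
      simpa using intervalIntegral.integral_mono_on (μ := volume) hle intervalIntegrable_const
        hG.intervalIntegrable fun t ht => hG ht.2
    rw [show x / 2 ^ m - x / 2 ^ (m + 1) = x / 2 ^ (m + 1) by ring] at hstep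
    rw [Finset.sum_range_succ, ← intervalIntegral.integral_add_adjacent_intervals (b := x / 2 ^ m)
      hG.intervalIntegrable hG.intervalIntegrable]
    linarith

theorem eventually_nat_mul_le_intervalIntegral (hG : Antitone G) (hGpos : ∀ x, 0 < G x)
    (hreg : ∀ lam : ℝ, 0 < lam → Tendsto (fun x => G (lam * x) / G x) atTop (𝓝 lam⁻¹))
    (m : ℕ) : ∀ᶠ x in atTop, m * (x * G x) ≤ 4 * ∫ t in (1:ℝ)..x, G t := by
  -- each dyadic block `[x / 2 ^ (k + 1), x / 2 ^ k]` then contributes at least `x G x / 4`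
  have hdyadic : ∀ k : ℕ, ∀ᶠ x in atTop, 2 ^ k * G x ≤ 2 * G (x / 2 ^ k) := by
    intro k
    have hlim := hreg ((2 ^ k)⁻¹) (by positivity)
    rw [inv_inv] at hlim
    filter_upwards [hlim.eventually (eventually_ge_nhds (half_lt_self (by positivity)))]
      with x hx
    rw [← div_eq_inv_mul, le_div_iff₀ (hGpos x)] at hx
    linarith
  filter_upwards [(Finset.range m).eventually_all.2 fun k _ => hdyadic k,
    eventually_ge_atTop (2 ^ m)] with x hk hx
  have hx0 : 0 ≤ x := (pow_pos two_pos m).le.trans hx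
  have hxm : 1 ≤ x / 2 ^ m := by rwa [le_div_iff₀ (by positivity), one_mul]
  calc m * (x * G x) = 4 * ∑ k ∈ Finset.range m, x / 2 ^ (k + 1) * (2 ^ k * G x / 2) := by
        rw [Finset.mul_sum, Finset.sum_congr rfl fun k _ => show
          4 * (x / 2 ^ (k + 1) * (2 ^ k * G x / 2)) = x * G x by field_simp; ring]
        simp
    _ ≤ 4 * ∑ k ∈ Finset.range m, x / 2 ^ (k + 1) * G (x / 2 ^ k) := by
        gcongr with k hkm
        linarith [hk k hkm]
    _ ≤ 4 * ∫ t in x / 2 ^ m..x, G t := by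
        gcongr
        exact sum_le_intervalIntegral_of_antitone hG hx0 m
    _ ≤ 4 * ∫ t in (1:ℝ)..x, G t := by
        rw [← intervalIntegral.integral_add_adjacent_intervals (a := 1) (b := x / 2 ^ m)
          hG.intervalIntegrable hG.intervalIntegrable]
        have := intervalIntegral.integral_nonneg (μ := volume) hxm fun t _ => (hGpos t).le
        linarith

theorem tendsto_mul_div_intervalIntegral (hG : Antitone G) (hGpos : ∀ x, 0 < G x)
    (hreg : ∀ lam : ℝ, 0 < lam → Tendsto (fun x => G (lam * x) / G x) atTop (𝓝 lam⁻¹)) :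
    Tendsto (fun x => x * G x / ∫ t in (1:ℝ)..x, G t) atTop (𝓝 0) := by
  have hratio : Tendsto (fun x => (∫ t in (1:ℝ)..x, G t) / (x * G x)) atTop atTop := by
    refine tendsto_atTop.2 fun r => ?_
    obtain ⟨m, hm⟩ := exists_nat_ge (4 * r)
    filter_upwards [eventually_nat_mul_le_intervalIntegral hG hGpos hreg m,
      eventually_gt_atTop 0] with x hx hx0
    have := mul_pos hx0 (hGpos x)
    rw [le_div_iff₀ this]
    nlinarith
  exact hratio.inv_tendsto_atTop.congr fun x => inv_div _ _

theorem tendsto_intervalIntegral_mul_div (hG : Antitone G) (hGpos : ∀ x, 0 < G x)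
    (hreg : ∀ lam : ℝ, 0 < lam → Tendsto (fun x => G (lam * x) / G x) atTop (𝓝 lam⁻¹))
    {K : ℝ} (hK : 1 ≤ K) :
    Tendsto (fun x => (∫ t in (1:ℝ)..K * x, G t) / ∫ t in (1:ℝ)..x, G t) atTop (𝓝 1) := by
  have hup : Tendsto (fun x => 1 + (K - 1) * (x * G x / ∫ t in (1:ℝ)..x, G t)) atTop
      (𝓝 (1 + (K - 1) * 0)) :=
    tendsto_const_nhds.add ((tendsto_mul_div_intervalIntegral hG hGpos hreg).const_mul _)
  rw [mul_zero, add_zero] at hup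
  have hbounds : ∀ᶠ x in atTop, 1 ≤ (∫ t in (1:ℝ)..K * x, G t) / (∫ t in (1:ℝ)..x, G t) ∧
      (∫ t in (1:ℝ)..K * x, G t) / (∫ t in (1:ℝ)..x, G t)
        ≤ 1 + (K - 1) * (x * G x / ∫ t in (1:ℝ)..x, G t) := by
    filter_upwards [eventually_nat_mul_le_intervalIntegral hG hGpos hreg 4,
      eventually_gt_atTop 0] with x hx hx0
    have hL : 0 < ∫ t in (1:ℝ)..x, G t := by push_cast at hx; nlinarith [mul_pos hx0 (hGpos x)]
    have hxK : x ≤ K * x := le_mul_of_one_le_left hx0.le hK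
    have hint : ∫ t in x..K * x, G t ≤ (K - 1) * (x * G x) := by
      have := intervalIntegral.integral_mono_on (μ := volume) hxK
        hG.intervalIntegrable intervalIntegrable_const fun t ht => hG ht.1
      simp only [intervalIntegral.integral_const, smul_eq_mul] at this
      linarith [show (K * x - x) * G x = (K - 1) * (x * G x) by ring]
    rw [← intervalIntegral.integral_add_adjacent_intervals (b := x)
      hG.intervalIntegrable hG.intervalIntegrable, add_div, div_self hL.ne', ← mul_div_assoc]
    constructor
    · have := intervalIntegral.integral_nonneg (μ := volume) hxK fun t _ => (hGpos t).le
      have := div_nonneg this hL.le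
      linarith
    · gcongr
  exact tendsto_of_tendsto_of_tendsto_of_le_of_le' tendsto_const_nhds hup
    (hbounds.mono fun _ h => h.1) (hbounds.mono fun _ h => h.2)

theorem tendsto_div_of_le_of_le_one_add {m L : ℝ → ℝ} (hL : Tendsto L atTop atTop)
    (hm : ∀ s, 1 ≤ s → L s ≤ m s ∧ m s ≤ 1 + L s) : Tendsto (fun s => m s / L s) atTop (𝓝 1) := by
  have hup : Tendsto (fun s => 1 + (L s)⁻¹) atTop (𝓝 1) := by
    simpa using tendsto_const_nhds.add hL.inv_tendsto_atTop
  refine tendsto_of_tendsto_of_tendsto_of_le_of_le' tendsto_const_nhds hup ?_ ?_ <;>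
    filter_upwards [hL.eventually_gt_atTop 0, eventually_ge_atTop 1] with s hLs hs
  · exact (one_le_div hLs).2 (hm s hs).1
  · rw [div_le_iff₀ hLs, add_mul, one_mul, inv_mul_cancel₀ hLs.ne']
    linarith [(hm s hs).2]

theorem exists_truncation_levels (hG : Antitone G) (hGpos : ∀ x, 0 < G x)
    (hreg : ∀ lam : ℝ, 0 < lam → Tendsto (fun x => G (lam * x) / G x) atTop (𝓝 lam⁻¹))
    (hL : Tendsto (fun y => ∫ t in (1:ℝ)..y, G t) atTop atTop) {m : ℝ → ℝ}
    (hm : ∀ s, 1 ≤ s → (∫ t in (1:ℝ)..s, G t) ≤ m s ∧ m s ≤ 1 + ∫ t in (1:ℝ)..s, G t)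
    {b : ℕ → ℝ} (hb : Tendsto b atTop atTop)
    (hnG : Tendsto (fun n : ℕ => n * G (b n)) atTop (𝓝 1)) {η : ℝ} (hη : 0 < η) :
    ∃ s : ℕ → ℝ, (∀ᶠ n in atTop, 0 ≤ s n ∧ n * G (s n) ≤ η) ∧
      Tendsto (fun n => n * m (s n) * (G (b n) / ∫ t in (1:ℝ)..b n, G t)) atTop (𝓝 1) ∧
      Tendsto (fun n => n * s n * m (s n) * (G (b n) / ∫ t in (1:ℝ)..b n, G t) ^ 2)
        atTop (𝓝 0) := by
  set L := fun y => ∫ t in (1:ℝ)..y, G t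
  set K := max 1 (2 / η)
  have hK1 : 1 ≤ K := le_max_left _ _
  have hKη : K⁻¹ < η := calc
    K⁻¹ ≤ (2 / η)⁻¹ := inv_anti₀ (by positivity) (le_max_right _ _)
    _ < η := by rw [inv_div]; linarith
  have hKb : Tendsto (fun n => K * b n) atTop atTop := hb.const_mul_atTop (by positivity)
  have hnGK : Tendsto (fun n : ℕ => n * G (K * b n)) atTop (𝓝 K⁻¹) := by
    have := hnG.mul ((hreg K (by positivity)).comp hb)
    rw [one_mul] at this
    refine this.congr fun n => ?_
    simp only [Function.comp_apply]
    field_simp [(hGpos (b n)).ne']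
  have hmean : Tendsto (fun n => n * G (b n) * (m (K * b n) / L (K * b n)) *
      (L (K * b n) / L (b n))) atTop (𝓝 (1 * 1 * 1)) :=
    (hnG.mul ((tendsto_div_of_le_of_le_one_add hL hm).comp hKb)).mul
      ((tendsto_intervalIntegral_mul_div hG hGpos hreg hK1).comp hb)
  rw [one_mul, one_mul] at hmean
  have hLpos : ∀ᶠ n in atTop, 0 < L (b n) ∧ 0 < L (K * b n) :=
    ((hL.comp hb).eventually_gt_atTop 0).and ((hL.comp hKb).eventually_gt_atTop 0)
  refine ⟨fun n => K * b n, ?_, hmean.congr' ?_, ?_⟩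
  · filter_upwards [hnGK.eventually (eventually_le_nhds hKη), hb.eventually_ge_atTop 0]
      with n hn hbn
    exact ⟨by positivity, hn⟩
  · filter_upwards [hLpos] with n hn
    simp only [L] at hn ⊢
    field_simp [hn.1.ne', hn.2.ne']
  · have hvar := (hmean.mul ((tendsto_mul_div_intervalIntegral hG hGpos hreg).comp hb)).const_mul K
    rw [mul_zero, mul_zero] at hvar
    refine hvar.congr' ?_
    filter_upwards [hLpos] with n hn
    simp only [L, Function.comp_apply] at hn ⊢
    field_simp [hn.1.ne', hn.2.ne']

theorem tendsto_atTop_of_antitone_of_tendsto_zero {ι : Type*} {l : Filter ι} {f : ℝ → ℝ}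
    (hf : Antitone f) (hpos : ∀ x, 0 < f x) {b : ι → ℝ}
    (hb : Tendsto (fun i => f (b i)) l (𝓝 0)) : Tendsto b l atTop := by
  refine tendsto_atTop.2 fun M => ?_
  filter_upwards [hb.eventually (gt_mem_nhds (hpos M))] with i hi
  by_contra h
  exact (hf (not_le.1 h).le).not_gt hi

theorem tendsto_nat_mul_of_le_of_le (hGpos : ∀ x, 0 < G x)
    (hreg : ∀ lam : ℝ, 0 < lam → Tendsto (fun x => G (lam * x) / G x) atTop (𝓝 lam⁻¹))
    {b : ℕ → ℝ} (hb : Tendsto b atTop atTop) (hlow : ∀ᶠ n in atTop, 1 ≤ n * G (b n))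
    (hup : ∀ lam : ℝ, 1 < lam → ∀ᶠ n in atTop, n * G (lam * b n) ≤ 1) :
    Tendsto (fun n : ℕ => n * G (b n)) atTop (𝓝 1) := by
  refine tendsto_order.2 ⟨fun a ha => hlow.mono fun n hn => ha.trans_le hn, fun a ha => ?_⟩
  set lam := (1 + a) / 2
  have hlam : 1 < lam := by simp only [lam]; linarith
  have hlama : lam < a := by simp only [lam]; linarith
  have hratio := ((hreg lam (by linarith)).comp hb).eventually
    (eventually_gt_nhds (inv_strictAnti₀ (by linarith) hlama))
  filter_upwards [hup lam hlam, hratio, eventually_ge_atTop 1] with n hn hr hn1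
  have hn0 : (0:ℝ) < n := by exact_mod_cast hn1
  rw [Function.comp_apply, inv_lt_iff_one_lt_mul₀ (by linarith), div_mul_eq_mul_div,
    one_lt_div (hGpos _)] at hr
  calc n * G (b n) < n * (G (lam * b n) * a) := mul_lt_mul_of_pos_left hr hn0
    _ = n * G (lam * b n) * a := by ring
    _ ≤ a := mul_le_of_le_one_left (by linarith) hn

end RegularVariation

theorem tendsto_intervalIntegral_atTop_of_not_integrableOn {f : ℝ → ℝ} {a : ℝ}
    (hf0 : ∀ x, 0 ≤ f x) (hfi : ∀ b, IntervalIntegrable f volume a b)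
    (hf : ¬IntegrableOn f (Ioi a)) : Tendsto (fun b => ∫ x in a..b, f x) atTop atTop := by
  refine tendsto_atTop_atTop.2 fun C => ?_
  obtain ⟨b₀, hb₀⟩ : ∃ b₀, C ≤ ∫ x in a..b₀, f x := by
    by_contra! h
    refine hf (integrableOn_Ioi_of_intervalIntegral_norm_bounded C a (fun b => (hfi b).1)
      tendsto_id (Eventually.of_forall fun b => ?_))
    simpa only [Real.norm_of_nonneg (hf0 _)] using (h b).le
  refine ⟨b₀, fun b hb => hb₀.trans ?_⟩
  rw [← intervalIntegral.integral_add_adjacent_intervals (hfi b₀) ((hfi b₀).symm.trans (hfi b))]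
  linarith [intervalIntegral.integral_nonneg (μ := volume) hb fun x _ => hf0 x]

section Truncation

variable {Ω : Type*} {mΩ : MeasurableSpace Ω} {μ : Measure Ω} [IsProbabilityMeasure μ]

theorem antitone_measureReal_le (X : Ω → ℝ) : Antitone fun t => μ.real {ω | t ≤ X ω} :=
  fun _ _ hst => measureReal_mono fun _ hω => hst.trans hω

theorem integral_min_eq_intervalIntegral {X : Ω → ℝ} (hX : Measurable X) (hX0 : ∀ ω, 0 ≤ X ω)
    {s : ℝ} (hs : 0 ≤ s) :
    ∫ ω, min (X ω) s ∂μ = ∫ t in (0:ℝ)..s, μ.real {ω | t ≤ X ω} := by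
  have hint : Integrable (fun ω => min (X ω) s) μ :=
    Integrable.of_bound (hX.min measurable_const).aestronglyMeasurable s
      (ae_of_all _ fun ω => by
        rw [Real.norm_of_nonneg (le_min (hX0 ω) hs)]; exact min_le_right _ _)
  rw [hint.integral_eq_integral_Ioc_meas_le (ae_of_all _ fun ω => le_min (hX0 ω) hs)
    (ae_of_all _ fun ω => min_le_right _ _), intervalIntegral.integral_of_le hs]
  refine setIntegral_congr_fun measurableSet_Ioc fun t ht => ?_
  simp only [le_min_iff, ht.2, and_true]

theorem intervalIntegral_le_integral_min_le_one_add {X : Ω → ℝ} (hX : Measurable X)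
    (hX0 : ∀ ω, 0 ≤ X ω) {s : ℝ} (hs : 1 ≤ s) :
    ∫ t in (1:ℝ)..s, μ.real {ω | t ≤ X ω} ≤ ∫ ω, min (X ω) s ∂μ ∧
      ∫ ω, min (X ω) s ∂μ ≤ 1 + ∫ t in (1:ℝ)..s, μ.real {ω | t ≤ X ω} := by
  have hanti := antitone_measureReal_le (μ := μ) X
  rw [integral_min_eq_intervalIntegral hX hX0 (zero_le_one.trans hs),
    ← intervalIntegral.integral_add_adjacent_intervals (a := 0) (b := 1) hanti.intervalIntegrable
      hanti.intervalIntegrable]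
  have h0 := intervalIntegral.integral_nonneg (μ := volume) zero_le_one
    fun t _ => measureReal_nonneg (μ := μ) (s := {ω | t ≤ X ω})
  have h1 : ∫ t in (0:ℝ)..1, μ.real {ω | t ≤ X ω} ≤ 1 := by
    simpa using intervalIntegral.integral_mono_on (μ := volume) zero_le_one
      hanti.intervalIntegrable intervalIntegrable_const fun t _ => measureReal_le_one
  constructor <;> linarith

theorem not_integrableOn_measureReal_le {X : Ω → ℝ} (hX : Measurable X) (hX0 : ∀ ω, 0 ≤ X ω)
    (hE : ∫⁻ ω, ENNReal.ofReal (X ω) ∂μ = ⊤) (a : ℝ) :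
    ¬IntegrableOn (fun t => μ.real {ω | t ≤ X ω}) (Ioi a) := by
  intro h
  have hI : IntegrableOn (fun t => μ.real {ω | t ≤ X ω}) (Ioi 0) :=
    ((antitone_measureReal_le X).intervalIntegrable (a := 0) (b := a)).1.union h |>.mono_set
      fun t ht => (le_or_gt t a).imp (fun hta => ⟨ht, hta⟩) id
  have hfin := hI.lintegral_lt_top
  rw [lintegral_congr fun t => ofReal_measureReal,
    ← lintegral_eq_lintegral_meas_le μ (ae_of_all _ hX0) hX.aemeasurable, hE] at hfin
  exact hfin.ne rfl

theorem variance_le_mul_integral {Y : Ω → ℝ} (hY : Measurable Y) {s : ℝ} (hY0 : ∀ ω, 0 ≤ Y ω)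
    (hYs : ∀ ω, Y ω ≤ s) : Var[Y; μ] ≤ s * ∫ ω, Y ω ∂μ := by
  have hint : Integrable Y μ := Integrable.of_bound hY.aestronglyMeasurable s
    (ae_of_all _ fun ω => by rw [Real.norm_of_nonneg (hY0 ω)]; exact hYs ω)
  calc Var[Y; μ] ≤ ∫ ω, (Y ^ 2) ω ∂μ := variance_le_expectation_sq hY.aestronglyMeasurable
    _ ≤ ∫ ω, s * Y ω ∂μ := integral_mono_of_nonneg (ae_of_all _ fun ω => sq_nonneg _)
        (hint.const_mul s) (ae_of_all _ fun ω => by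
          simp only [Pi.pow_apply]; nlinarith [hY0 ω, hYs ω])
    _ = s * ∫ ω, Y ω ∂μ := integral_const_mul s _

theorem measureReal_lt_of_measureReal_le {X : Ω → ℝ} (hX : Measurable X) {x p : ℝ}
    (h : μ.real {ω | X ω ≤ x} = 1 - p) : μ.real {ω | x < X ω} = p := by
  have hcompl : {ω | x < X ω} = {ω | X ω ≤ x}ᶜ := by ext; simp
  rw [hcompl, measureReal_compl (measurableSet_le hX measurable_const), h, probReal_univ]
  ring

theorem tendsto_atTop_of_measureReal_lt_eq {X : Ω → ℝ} (hGpos : ∀ x, 0 < μ.real {ω | x ≤ X ω})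
    {b : ℕ → ℝ} (hbq : ∀ n : ℕ, 1 ≤ n → μ.real {ω | b n < X ω} = 1 / n) :
    Tendsto b atTop atTop :=
  tendsto_atTop_of_antitone_of_tendsto_zero (f := fun x => μ.real {ω | x < X ω})
    (fun _ _ hst => measureReal_mono fun _ hω => hst.trans_lt hω)
    (fun x => (hGpos (x + 1)).trans_le (measureReal_mono fun _ hω => (lt_add_one x).trans_le hω))
    (tendsto_one_div_atTop_nhds_zero_nat.congr' ((eventually_ge_atTop 1).mono fun n hn =>
      (hbq n hn).symm))

theorem tendsto_nat_mul_measureReal_quantile {X : Ω → ℝ}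
    (hGpos : ∀ x, 0 < μ.real {ω | x ≤ X ω})
    (hreg : ∀ lam : ℝ, 0 < lam → Tendsto (fun x => μ.real {ω | lam * x ≤ X ω} /
      μ.real {ω | x ≤ X ω}) atTop (𝓝 lam⁻¹))
    {b : ℕ → ℝ} (hbq : ∀ n : ℕ, 1 ≤ n → μ.real {ω | b n < X ω} = 1 / n) :
    Tendsto (fun n : ℕ => n * μ.real {ω | b n ≤ X ω}) atTop (𝓝 1) := by
  have hb := tendsto_atTop_of_measureReal_lt_eq hGpos hbq
  have hnH : ∀ n : ℕ, 1 ≤ n → n * μ.real {ω | b n < X ω} = 1 := fun n hn => by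
    rw [hbq n hn, mul_one_div_cancel (by positivity)]
  refine tendsto_nat_mul_of_le_of_le (G := fun x => μ.real {ω | x ≤ X ω}) hGpos hreg hb ?_
    fun lam hlam => ?_
  · filter_upwards [eventually_ge_atTop 1] with n hn
    rw [← hnH n hn]
    exact mul_le_mul_of_nonneg_left (measureReal_mono fun ω (hω : b n < X ω) => hω.le) n.cast_nonneg
  · filter_upwards [eventually_ge_atTop 1, hb.eventually_gt_atTop 0] with n hn hbn
    rw [← hnH n hn]
    exact mul_le_mul_of_nonneg_left (measureReal_mono fun ω hω =>
      (lt_mul_of_one_lt_left hbn hlam).trans_le hω) n.cast_nonneg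

variable {X : ℕ → Ω → ℝ}

theorem measure_biUnion_le_le (hident : ∀ i, IdentDistrib (X i) (X 0) μ μ) (s : ℝ) (n : ℕ) :
    μ (⋃ i ∈ Finset.range n, {ω | s ≤ X i ω}) ≤ ENNReal.ofReal (n * μ.real {ω | s ≤ X 0 ω}) :=
  calc μ (⋃ i ∈ Finset.range n, {ω | s ≤ X i ω})
      ≤ ∑ i ∈ Finset.range n, μ {ω | s ≤ X i ω} := measure_biUnion_finset_le _ _
    _ = ∑ i ∈ Finset.range n, μ {ω | s ≤ X 0 ω} :=
        Finset.sum_congr rfl fun i _ => (hident i).measure_mem_eq measurableSet_Ici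
    _ = ENNReal.ofReal (n * μ.real {ω | s ≤ X 0 ω}) := by
        rw [Finset.sum_const, Finset.card_range, nsmul_eq_mul,
          ENNReal.ofReal_mul (Nat.cast_nonneg n), ENNReal.ofReal_natCast, ofReal_measureReal]

theorem measure_le_abs_sum_min_sub_le (hX : ∀ i, Measurable (X i)) (hindep : iIndepFun X μ)
    (hident : ∀ i, IdentDistrib (X i) (X 0) μ μ) (hX0 : ∀ i ω, 0 ≤ X i ω) {s r : ℝ}
    (hs : 0 ≤ s) (hr : 0 < r) (n : ℕ) :
    μ {ω | r ≤ |∑ i ∈ Finset.range n, min (X i ω) s - n * ∫ ω, min (X 0 ω) s ∂μ|}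
      ≤ ENNReal.ofReal (n * s * (∫ ω, min (X 0 ω) s ∂μ) / r ^ 2) := by
  set Y : ℕ → Ω → ℝ := fun i ω => min (X i ω) s
  have hYmeas : ∀ i, Measurable (Y i) := fun i => (hX i).min measurable_const
  have hYmem : ∀ i, MemLp (Y i) 2 μ := fun i =>
    MemLp.of_bound (hYmeas i).aestronglyMeasurable s (ae_of_all _ fun ω => by
      rw [Real.norm_of_nonneg (le_min (hX0 i ω) hs)]; exact min_le_right _ _)
  have hYid : ∀ i, IdentDistrib (Y i) (Y 0) μ μ := fun i =>
    (hident i).comp (measurable_id.min measurable_const)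
  have hmean : μ[∑ i ∈ Finset.range n, Y i] = n * ∫ ω, Y 0 ω ∂μ := by
    simp only [Finset.sum_apply]
    rw [integral_finsetSum _ fun i _ => (hYmem i).integrable one_le_two]
    simp [(hYid _).integral_eq]
  have hvar : Var[∑ i ∈ Finset.range n, Y i; μ] ≤ n * s * ∫ ω, Y 0 ω ∂μ := by
    rw [IndepFun.variance_sum (fun i _ => hYmem i) fun i _ j _ hij =>
      (hindep.comp (fun _ x => min x s) fun _ => measurable_id.min measurable_const).indepFun hij,
      Finset.sum_congr rfl fun i _ => (hYid i).variance_eq, Finset.sum_const, Finset.card_range,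
      nsmul_eq_mul, mul_assoc]
    gcongr
    exact variance_le_mul_integral (hYmeas 0) (fun ω => le_min (hX0 0 ω) hs)
      fun ω => min_le_right _ _
  calc μ {ω | r ≤ |∑ i ∈ Finset.range n, min (X i ω) s - n * ∫ ω, min (X 0 ω) s ∂μ|}
      = μ {ω | r ≤ |(∑ i ∈ Finset.range n, Y i) ω - μ[∑ i ∈ Finset.range n, Y i]|} := by
        rw [hmean]; simp only [Y, Finset.sum_apply]
    _ ≤ ENNReal.ofReal (Var[∑ i ∈ Finset.range n, Y i; μ] / r ^ 2) :=
        meas_ge_le_variance_div_sq (memLp_finsetSum' _ fun i _ => hYmem i) hr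
    _ ≤ ENNReal.ofReal (n * s * (∫ ω, min (X 0 ω) s ∂μ) / r ^ 2) := by gcongr

theorem measure_le_abs_sum_sub_le (hX : ∀ i, Measurable (X i)) (hindep : iIndepFun X μ)
    (hident : ∀ i, IdentDistrib (X i) (X 0) μ μ) (hX0 : ∀ i ω, 0 ≤ X i ω) {s r : ℝ}
    (hs : 0 ≤ s) (hr : 0 < r) (n : ℕ) :
    μ {ω | r ≤ |∑ i ∈ Finset.range n, X i ω - n * ∫ ω, min (X 0 ω) s ∂μ|}
      ≤ ENNReal.ofReal (n * μ.real {ω | s ≤ X 0 ω} + n * s * (∫ ω, min (X 0 ω) s ∂μ) / r ^ 2) := by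
  have hsub : {ω | r ≤ |∑ i ∈ Finset.range n, X i ω - n * ∫ ω, min (X 0 ω) s ∂μ|} ⊆
      (⋃ i ∈ Finset.range n, {ω | s ≤ X i ω}) ∪
        {ω | r ≤ |∑ i ∈ Finset.range n, min (X i ω) s - n * ∫ ω, min (X 0 ω) s ∂μ|} := by
    intro ω hω
    by_cases h : ∃ i ∈ Finset.range n, s ≤ X i ω
    · left
      obtain ⟨i, hi, hsi⟩ := h
      exact mem_biUnion hi hsi
    · right
      push Not at h
      show r ≤ _
      rwa [Finset.sum_congr rfl fun i hi => min_eq_left (h i hi).le]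
  have hm : 0 ≤ ∫ ω, min (X 0 ω) s ∂μ := integral_nonneg fun ω => le_min (hX0 0 ω) hs
  rw [ENNReal.ofReal_add (by positivity) (by positivity)]
  exact (measure_mono hsub).trans ((measure_union_le _ _).trans (add_le_add
    (measure_biUnion_le_le hident s n)
    (measure_le_abs_sum_min_sub_le hX hindep hident hX0 hs hr n)))

theorem tendsto_measure_lt_abs_sum_mul_sub_one (hX : ∀ i, Measurable (X i))
    (hindep : iIndepFun X μ) (hident : ∀ i, IdentDistrib (X i) (X 0) μ μ)
    (hX0 : ∀ i ω, 0 ≤ X i ω) {c : ℕ → ℝ} (hc : ∀ᶠ n in atTop, 0 < c n)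
    (htrunc : ∀ η : ℝ, 0 < η → ∃ s : ℕ → ℝ,
      (∀ᶠ n in atTop, 0 ≤ s n ∧ n * μ.real {ω | s n ≤ X 0 ω} ≤ η) ∧
      Tendsto (fun n => n * (∫ ω, min (X 0 ω) (s n) ∂μ) * c n) atTop (𝓝 1) ∧
      Tendsto (fun n => n * s n * (∫ ω, min (X 0 ω) (s n) ∂μ) * c n ^ 2) atTop (𝓝 0))
    {ε : ℝ} (hε : 0 < ε) :
    Tendsto (fun n => μ {ω | ε < |(∑ i ∈ Finset.range n, X i ω) * c n - 1|}) atTop (𝓝 0) := by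
  refine tendsto_order.2 ⟨fun _ h => absurd h ENNReal.not_lt_zero, fun δ hδ => ?_⟩
  obtain ⟨η, -, hη, hηδ⟩ := ENNReal.lt_iff_exists_real_btwn.1 hδ
  rw [ENNReal.ofReal_pos] at hη
  obtain ⟨s, hs, hmean, hvar⟩ := htrunc (η / 2) (half_pos hη)
  filter_upwards [hc, hs, Metric.tendsto_nhds.1 hmean (ε / 2) (half_pos hε),
    hvar.eventually (gt_mem_nhds (show 0 < ε ^ 2 * η / 8 by positivity))]
    with n hcn ⟨hsn, htail⟩ hm hv
  set m := ∫ ω, min (X 0 ω) (s n) ∂μ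
  have hr : 0 < ε / (2 * c n) := by positivity
  refine lt_of_le_of_lt ?_ hηδ
  calc μ {ω | ε < |(∑ i ∈ Finset.range n, X i ω) * c n - 1|}
      ≤ μ {ω | ε / (2 * c n) ≤ |∑ i ∈ Finset.range n, X i ω - n * m|} := by
        refine measure_mono fun ω hω => ?_
        by_contra h
        have h : |∑ i ∈ Finset.range n, X i ω - n * m| * (2 * c n) < ε :=
          (lt_div_iff₀ (by positivity)).1 (not_le.1 h)
        rw [Real.dist_eq] at hm
        have : |(∑ i ∈ Finset.range n, X i ω) * c n - 1|
            ≤ |∑ i ∈ Finset.range n, X i ω - n * m| * c n + |n * m * c n - 1| := by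
          calc _ = |(∑ i ∈ Finset.range n, X i ω - n * m) * c n + (n * m * c n - 1)| := by ring_nf
            _ ≤ _ := by rw [← abs_of_pos hcn, ← abs_mul, abs_of_pos hcn]; exact abs_add_le _ _
        exact (lt_irrefl ε) (by linarith [hω.out])
    _ ≤ ENNReal.ofReal (n * μ.real {ω | s n ≤ X 0 ω} + n * s n * m / (ε / (2 * c n)) ^ 2) :=
        measure_le_abs_sum_sub_le hX hindep hident hX0 hsn hr n
    _ ≤ ENNReal.ofReal η := by
        refine ENNReal.ofReal_le_ofReal ?_
        have : n * s n * m / (ε / (2 * c n)) ^ 2 = 4 * (n * s n * m * c n ^ 2) / ε ^ 2 := by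
          field_simp; ring
        have hcheb : 4 * (n * s n * m * c n ^ 2) / ε ^ 2 ≤ η / 2 := by
          rw [div_le_iff₀ (by positivity)]
          linarith
        linarith

end Truncation

/-- If `α = 1` (tail `P(Δ ≥ x) = x⁻¹ ℓ(x)` for `x ≥ 1`) and `E(Δ) = ∞`, then
`(Tₙ/bₙ) · (ℓ(bₙ)/ℓ*(bₙ)) → 1` in probability as `n → ∞`. -/
theorem stmt6 {Ω : Type*} [MeasureSpace Ω] [IsProbabilityMeasure (ℙ : Measure Ω)]
    (Δ : ℕ → Ω → ℝ) (hmeas : ∀ i, Measurable (Δ i))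
    (hindep : iIndepFun Δ ℙ)
    (hident : ∀ i, IdentDistrib (Δ i) (Δ 0) ℙ ℙ)
    (hpos : ∀ i ω, 0 < Δ i ω)
    (T : ℕ → Ω → ℝ) (hT : ∀ k ω, T k ω = ∑ i ∈ Finset.range k, Δ i ω)
    (ℓ : ℝ → ℝ)
    (hslow : ∀ lam : ℝ, 0 < lam → Tendsto (fun x => ℓ (lam * x) / ℓ x) atTop (𝓝 1))
    (htail : ∀ x : ℝ, 1 ≤ x → (ℙ {ω | x ≤ Δ 0 ω}).toReal = x ^ (-(1:ℝ)) * ℓ x)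
    (hEΔ : ∫⁻ ω, ENNReal.ofReal (Δ 0 ω) ∂ℙ = ⊤)
    (b : ℕ → ℝ)
    (hb : ∀ n : ℕ, 1 ≤ n → (ℙ {ω | Δ 0 ω ≤ b n}).toReal = 1 - 1 / n)
    (ℓs : ℝ → ℝ) (hℓs : ∀ y : ℝ, ℓs y = ∫ x in (1:ℝ)..y, ℓ x / x) :
    ∀ ε : ℝ, 0 < ε →
      Tendsto (fun n : ℕ =>
        ℙ {ω | ε < |T n ω / b n * (ℓ (b n) / ℓs (b n)) - 1|}) atTop (𝓝 0) := by
  intro ε hε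
  have hGanti := antitone_measureReal_le (μ := ℙ) (Δ 0)
  have hΔ0 : ∀ ω, 0 ≤ Δ 0 ω := fun ω => (hpos 0 ω).le
  have hℓG : ∀ x, 1 ≤ x → ℓ x = x * (ℙ : Measure Ω).real {ω | x ≤ Δ 0 ω} := fun x hx => by
    rw [measureReal_def, htail x hx, Real.rpow_neg_one, mul_inv_cancel_left₀ (by positivity)]
  have hreg := fun lam (hlam : 0 < lam) => tendsto_div_of_slowlyVarying hℓG hslow hlam
  have hGpos := pos_of_antitone_of_eventually_ne_zero hGanti (fun _ => measureReal_nonneg)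
    (by simpa using (hreg 1 one_pos).eventually_ne (inv_ne_zero one_ne_zero))
  have hbq := fun n hn => measureReal_lt_of_measureReal_le (hmeas 0) (hb n hn)
  have hbtop := tendsto_atTop_of_measureReal_lt_eq hGpos hbq
  have hL := tendsto_intervalIntegral_atTop_of_not_integrableOn (fun _ => measureReal_nonneg)
    (fun _ => hGanti.intervalIntegrable)
    (not_integrableOn_measureReal_le (hmeas 0) hΔ0 hEΔ 1)
  -- the normalisation `ℓ(bₙ) / (bₙ ℓ*(bₙ))` equals `G(bₙ) / ℓ*(bₙ)`
  refine (tendsto_measure_lt_abs_sum_mul_sub_one hmeas hindep hident (fun i ω => (hpos i ω).le)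
    (((hL.comp hbtop).eventually_gt_atTop 0).mono fun n hn => div_pos (hGpos (b n)) hn)
    (fun η hη => exists_truncation_levels hGanti hGpos hreg hL
      (fun s hs => intervalIntegral_le_integral_min_le_one_add (hmeas 0) hΔ0 hs)
      hbtop (tendsto_nat_mul_measureReal_quantile hGpos hreg hbq) hη) hε).congr' ?_
  filter_upwards [hbtop.eventually_ge_atTop 1] with n hn
  have hb0 : b n ≠ 0 := by positivity
  simp_rw [hT, hℓs, intervalIntegral_div_eq_of_eq_mul hℓG hn, hℓG _ hn]
  congr! 4 with ω
  field_simp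
  rfl
end

section
/- Let U_1, U_2, … be i.i.d. random variables uniformly distributed on (0,1). Then (ln n) · E[ n / (1/U_1 + ⋯ + 1/U_n) ] → 1 as n → ∞. -/
/-
Truncate: with `T_c = ∑_{i<n} min (1/U_i) c` one has `E T_c = n (1 + log c)` and
`Var T_c ≤ 2 n c`. Both bounds on `E[n / ∑ 1/U_i]` come from the tangent line of `x ↦ 1/x`
at `m = E T_c`, `2/m - x/m² ≤ 1/x ≤ 2/m - x/m² + (x - m)²/(m² a)`
for `x ≥ a > 0`.
Upper bound: `n / ∑ 1/U_i ≤ n / T_n` and `T_n ≥ n`, so the variance term gives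
`E[n / ∑ 1/U_i] ≤ 1/(1 + log n) + 2/(1 + log n)²`.
Lower bound: `n / ∑ 1/U_i` equals `n / T_c` unless some `1/U_i > c`, in which case `n / T_c ≤ n/c`;
with Jensen this gives `E[n / ∑ 1/U_i] ≥ 1/(1 + log c) - (n/c)²`, and `c = n log n` finishes.
-/

open MeasureTheory ProbabilityTheory Filter Set Topology

-- The tangent line of `x ↦ x⁻¹` at `m`, with its exact remainder.
theorem inv_eq_two_div_sub_div_sq_add {x m : ℝ} (hx : x ≠ 0) (hm : m ≠ 0) :
    x⁻¹ = 2 / m - x / m ^ 2 + (x - m) ^ 2 / (m ^ 2 * x) := by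
  field_simp
  ring

theorem two_div_sub_div_sq_le_inv {x m : ℝ} (hx : 0 < x) (hm : m ≠ 0) :
    2 / m - x / m ^ 2 ≤ x⁻¹ := by
  rw [inv_eq_two_div_sub_div_sq_add hx.ne' hm]
  have : 0 ≤ (x - m) ^ 2 / (m ^ 2 * x) := by positivity
  linarith

theorem inv_le_two_div_sub_div_sq_add {a x m : ℝ} (ha : 0 < a) (hax : a ≤ x) (hm : m ≠ 0) :
    x⁻¹ ≤ 2 / m - x / m ^ 2 + (x - m) ^ 2 / (m ^ 2 * a) := by
  rw [inv_eq_two_div_sub_div_sq_add (ha.trans_le hax).ne' hm]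
  gcongr

section Inverse

variable {Ω : Type*} [MeasurableSpace Ω] {μ : Measure Ω} {X : Ω → ℝ}

theorem integral_pos_of_ae_pos [NeZero μ] (hX : Integrable X μ) (hpos : ∀ᵐ ω ∂μ, 0 < X ω) :
    0 < μ[X] := by
  rw [integral_pos_iff_support_of_nonneg_ae (hpos.mono fun _ h => h.le) hX,
    measure_congr (ae_eq_univ.2 (hpos.mono fun _ h => h.ne') : Function.support X =ᵐ[μ] univ)]
  simpa using NeZero.ne μ

theorem integrable_inv_of_ae_le [IsFiniteMeasure μ] (hX : AEMeasurable X μ) {a : ℝ} (ha : 0 < a)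
    (hge : ∀ᵐ ω ∂μ, a ≤ X ω) : Integrable X⁻¹ μ := by
  refine Integrable.of_bound hX.inv.aestronglyMeasurable a⁻¹ ?_
  filter_upwards [hge] with ω h
  rw [Pi.inv_apply, Real.norm_eq_abs, abs_inv, abs_of_pos (ha.trans_le h)]
  exact inv_anti₀ ha h

theorem inv_integral_le_integral_inv [IsProbabilityMeasure μ] (hX : Integrable X μ)
    (hXinv : Integrable X⁻¹ μ) (hpos : ∀ᵐ ω ∂μ, 0 < X ω) : (μ[X])⁻¹ ≤ μ[X⁻¹] := by
  have hm := integral_pos_of_ae_pos hX hpos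
  calc (μ[X])⁻¹ = ∫ ω, (2 / μ[X] - X ω / μ[X] ^ 2) ∂μ := by
        rw [integral_sub (integrable_const _) (hX.div_const _), integral_const, integral_div]
        simp only [probReal_univ, smul_eq_mul, one_mul]
        field_simp
        ring
    _ ≤ μ[X⁻¹] := integral_mono_ae (g := X⁻¹) ((integrable_const _).sub (hX.div_const _)) hXinv
        (hpos.mono fun ω h => two_div_sub_div_sq_le_inv h hm.ne')

theorem integral_inv_le_inv_integral_add_variance [IsProbabilityMeasure μ] {a : ℝ}
    (hX : MemLp X 2 μ) (ha : 0 < a) (hge : ∀ᵐ ω ∂μ, a ≤ X ω) :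
    μ[X⁻¹] ≤ (μ[X])⁻¹ + Var[X; μ] / (μ[X] ^ 2 * a) := by
  have hXint := hX.integrable one_le_two
  have hm := integral_pos_of_ae_pos hXint (hge.mono fun _ h => ha.trans_le h)
  have hXinv := integrable_inv_of_ae_le hX.1.aemeasurable ha hge
  have hsq : Integrable (fun ω => (X ω - μ[X]) ^ 2 / (μ[X] ^ 2 * a)) μ :=
    ((hX.sub (memLp_const _)).integrable_sq).div_const _
  calc μ[X⁻¹] ≤ ∫ ω, (2 / μ[X] - X ω / μ[X] ^ 2 + (X ω - μ[X]) ^ 2 / (μ[X] ^ 2 * a)) ∂μ :=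
        integral_mono_ae (f := X⁻¹) hXinv (((integrable_const _).sub (hXint.div_const _)).add hsq)
          (hge.mono fun ω h => inv_le_two_div_sub_div_sq_add ha h hm.ne')
    _ = (μ[X])⁻¹ + Var[X; μ] / (μ[X] ^ 2 * a) := by
        rw [integral_add (f := fun ω => 2 / μ[X] - X ω / μ[X] ^ 2)
            ((integrable_const _).sub (hXint.div_const _)) hsq,
          integral_sub (integrable_const _) (hXint.div_const _), integral_const, integral_div,
          integral_div, variance_eq_integral hX.1.aemeasurable]
        simp only [probReal_univ, smul_eq_mul, one_mul]
        field_simp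
        ring

end Inverse

theorem setIntegral_Ioo_comp_min_inv {f : ℝ → ℝ} (hf : Continuous f) {c : ℝ} (hc : 1 ≤ c) :
    ∫ x in Ioo 0 1, f (min x⁻¹ c) = c⁻¹ * f c + ∫ x in c⁻¹..1, f x⁻¹ := by
  have hc0 : 0 < c := by linarith
  have hb0 : 0 < c⁻¹ := inv_pos.2 hc0
  have hb1 : c⁻¹ ≤ 1 := inv_le_one_of_one_le₀ hc
  have hleft : EqOn (fun x => f (min x⁻¹ c)) (fun _ => f c) (uIoc 0 c⁻¹) := fun x hx => by
    rw [uIoc_of_le hb0.le] at hx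
    simp only [min_eq_right ((le_inv_comm₀ hx.1 hc0).1 hx.2)]
  have hright : EqOn (fun x => f (min x⁻¹ c)) (fun x => f x⁻¹) (uIcc c⁻¹ 1) := fun x hx => by
    rw [uIcc_of_le hb1] at hx
    simp only [min_eq_left ((inv_le_comm₀ (hb0.trans_le hx.1) hc0).2 hx.1)]
  have hleft_int : IntervalIntegrable (fun x => f (min x⁻¹ c)) volume 0 c⁻¹ :=
    intervalIntegrable_const.congr hleft.symm
  have hright_int : IntervalIntegrable (fun x => f (min x⁻¹ c)) volume c⁻¹ 1 := by
    refine (ContinuousOn.intervalIntegrable ?_).congr (hright.symm.mono uIoc_subset_uIcc)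
    refine hf.comp_continuousOn (continuousOn_inv₀.mono fun x hx => ?_)
    rw [uIcc_of_le hb1] at hx
    exact (hb0.trans_le hx.1).ne'
  rw [← integral_Ioc_eq_integral_Ioo, ← intervalIntegral.integral_of_le zero_le_one,
    ← intervalIntegral.integral_add_adjacent_intervals hleft_int hright_int,
    intervalIntegral.integral_congr_ae (Eventually.of_forall fun x hx => hleft hx),
    intervalIntegral.integral_congr hright, intervalIntegral.integral_const, sub_zero, smul_eq_mul]

theorem setIntegral_Ioo_min_inv {c : ℝ} (hc : 1 ≤ c) :
    ∫ x in Ioo 0 1, min x⁻¹ c = 1 + Real.log c := by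
  have hc0 : 0 < c := by linarith
  have := setIntegral_Ioo_comp_min_inv (f := id) continuous_id hc
  simp only [id] at this
  rw [this, integral_inv_of_pos (inv_pos.2 hc0) one_pos, one_div, inv_inv,
    inv_mul_cancel₀ hc0.ne']

theorem setIntegral_Ioo_min_inv_sq {c : ℝ} (hc : 1 ≤ c) :
    ∫ x in Ioo 0 1, (min x⁻¹ c) ^ 2 = 2 * c - 1 := by
  have hc0 : 0 < c := by linarith
  have hzero : (0 : ℝ) ∉ uIcc c⁻¹ 1 := by
    rw [uIcc_of_le (inv_le_one_of_one_le₀ hc)]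
    exact fun h => (inv_pos.2 hc0).not_ge h.1
  rw [setIntegral_Ioo_comp_min_inv (continuous_pow 2) hc]
  have hpow (x : ℝ) : x⁻¹ ^ 2 = x ^ (-2 : ℤ) := by rw [zpow_neg, zpow_ofNat, inv_pow]
  simp only [hpow]
  rw [integral_zpow (Or.inr ⟨by norm_num, hzero⟩)]
  norm_num [zpow_neg_one]
  field_simp
  ring

section UniformVariable

variable {Ω : Type*} [MeasurableSpace Ω] {μ : Measure Ω} {V : Ω → ℝ}

theorem ae_mem_Ioo_of_map_eq (hV : Measurable V)
    (hunif : μ.map V = volume.restrict (Ioo 0 1)) : ∀ᵐ ω ∂μ, V ω ∈ Ioo (0 : ℝ) 1 :=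
  ae_of_ae_map hV.aemeasurable (hunif ▸ ae_restrict_mem measurableSet_Ioo)

theorem integral_comp_of_map_eq (hV : Measurable V)
    (hunif : μ.map V = volume.restrict (Ioo 0 1)) {g : ℝ → ℝ} (hg : Measurable g) :
    ∫ ω, g (V ω) ∂μ = ∫ x in Ioo 0 1, g x := by
  rw [← integral_map hV.aemeasurable hg.aestronglyMeasurable, hunif]

theorem memLp_min_inv [IsFiniteMeasure μ] {c : ℝ} (hV : Measurable V)
    (hunif : μ.map V = volume.restrict (Ioo 0 1)) (hc : 1 ≤ c) :
    MemLp (fun ω => min (V ω)⁻¹ c) 2 μ := by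
  refine MemLp.of_bound (hV.inv.min measurable_const).aestronglyMeasurable c ?_
  filter_upwards [ae_mem_Ioo_of_map_eq hV hunif] with ω hω
  have : 1 ≤ (V ω)⁻¹ := one_le_inv₀ hω.1 |>.2 hω.2.le
  rw [Real.norm_eq_abs, abs_of_nonneg (by positivity)]
  exact min_le_right _ _

theorem integral_min_inv {c : ℝ} (hV : Measurable V) (hunif : μ.map V = volume.restrict (Ioo 0 1))
    (hc : 1 ≤ c) : ∫ ω, min (V ω)⁻¹ c ∂μ = 1 + Real.log c := by
  rw [integral_comp_of_map_eq hV hunif (measurable_inv.min measurable_const),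
    setIntegral_Ioo_min_inv hc]

theorem variance_min_inv_le [IsProbabilityMeasure μ] {c : ℝ} (hV : Measurable V)
    (hunif : μ.map V = volume.restrict (Ioo 0 1)) (hc : 1 ≤ c) :
    Var[fun ω => min (V ω)⁻¹ c; μ] ≤ 2 * c := by
  refine (variance_le_expectation_sq (hV.inv.min measurable_const).aestronglyMeasurable).trans ?_
  change ∫ ω, (min (V ω)⁻¹ c) ^ 2 ∂μ ≤ 2 * c
  rw [integral_comp_of_map_eq hV hunif ((measurable_inv.min measurable_const).pow_const 2),
    setIntegral_Ioo_min_inv_sq hc]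
  linarith

theorem integral_indicator_lt_inv {c : ℝ} (hV : Measurable V)
    (hunif : μ.map V = volume.restrict (Ioo 0 1)) (hc : 1 ≤ c) :
    ∫ ω, {x : ℝ | c < x⁻¹}.indicator 1 (V ω) ∂μ = c⁻¹ := by
  have hc0 : 0 < c := by linarith
  have hset : {x : ℝ | c < x⁻¹} ∩ Ioo 0 1 = Ioo 0 c⁻¹ := by
    ext x
    simp only [mem_inter_iff, mem_ofPred_eq, mem_Ioo]
    constructor
    · rintro ⟨h, hx0, -⟩
      exact ⟨hx0, (lt_inv_comm₀ hc0 hx0).1 h⟩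
    · rintro ⟨hx0, hx⟩
      exact ⟨(lt_inv_comm₀ hx0 hc0).1 hx, hx0, hx.trans_le (inv_le_one_of_one_le₀ hc)⟩
  have hmeas : MeasurableSet {x : ℝ | c < x⁻¹} := measurableSet_lt measurable_const measurable_inv
  rw [integral_comp_of_map_eq hV hunif ((measurable_one.indicator hmeas)),
    integral_indicator_one hmeas, measureReal_restrict_apply hmeas, hset,
    Real.volume_real_Ioo_of_le (inv_pos.2 hc0).le, sub_zero]

end UniformVariable

-- If no `(x i)⁻¹` exceeds `c` the truncation changes nothing; otherwise the truncated sum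
-- is already at least `c`, and the correction term makes the left side nonpositive.
theorem mul_inv_sum_min_sub_le {ι : Type*} (s : Finset ι) {x : ι → ℝ} (hx : ∀ i ∈ s, 0 < x i)
    {b c : ℝ} (hb : 0 ≤ b) (hc : 0 < c) :
    b * (∑ i ∈ s, min (x i)⁻¹ c)⁻¹ - b / c * ∑ i ∈ s, {y : ℝ | c < y⁻¹}.indicator 1 (x i)
      ≤ b / ∑ i ∈ s, (x i)⁻¹ := by
  have hS : 0 ≤ ∑ i ∈ s, (x i)⁻¹ := Finset.sum_nonneg fun i hi => (inv_pos.2 (hx i hi)).le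
  by_cases hsmall : ∀ i ∈ s, (x i)⁻¹ ≤ c
  · rw [Finset.sum_congr rfl fun i hi => min_eq_left (hsmall i hi), ← div_eq_mul_inv]
    have : 0 ≤ b / c * ∑ i ∈ s, {y : ℝ | c < y⁻¹}.indicator 1 (x i) :=
      mul_nonneg (div_nonneg hb hc.le)
        (Finset.sum_nonneg fun i _ => indicator_nonneg (fun _ _ => zero_le_one) _)
    linarith
  push Not at hsmall
  obtain ⟨j, hj, hjc⟩ := hsmall
  have hT : c ≤ ∑ i ∈ s, min (x i)⁻¹ c := by
    calc c = min (x j)⁻¹ c := (min_eq_right hjc.le).symm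
      _ ≤ _ := Finset.single_le_sum (f := fun i => min (x i)⁻¹ c)
          (fun i hi => le_min (inv_pos.2 (hx i hi)).le hc.le) hj
  have hN : 1 ≤ ∑ i ∈ s, {y : ℝ | c < y⁻¹}.indicator (1 : ℝ → ℝ) (x i) := by
    calc (1 : ℝ) = {y : ℝ | c < y⁻¹}.indicator 1 (x j) := by simp [hjc]
      _ ≤ _ := Finset.single_le_sum (f := fun i => {y : ℝ | c < y⁻¹}.indicator (1 : ℝ → ℝ) (x i))
          (fun i _ => indicator_nonneg (fun _ _ => zero_le_one) _) hj
  have h1 : b * (∑ i ∈ s, min (x i)⁻¹ c)⁻¹ ≤ b / c := by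
    rw [← div_eq_mul_inv]; gcongr
  have h2 : b / c ≤ b / c * ∑ i ∈ s, {y : ℝ | c < y⁻¹}.indicator 1 (x i) :=
    le_mul_of_one_le_right (div_nonneg hb hc.le) hN
  have : 0 ≤ b / ∑ i ∈ s, (x i)⁻¹ := div_nonneg hb hS
  linarith

section Sequence

variable {Ω : Type*} {U : ℕ → Ω → ℝ}

noncomputable def truncInvSum (U : ℕ → Ω → ℝ) (c : ℝ) (n : ℕ) (ω : Ω) : ℝ :=
  ∑ i ∈ Finset.range n, min (U i ω)⁻¹ c

theorem natCast_le_truncInvSum {c : ℝ} (hc : 1 ≤ c) (n : ℕ) {ω : Ω}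
    (hω : ∀ i, U i ω ∈ Ioo (0 : ℝ) 1) :
    (n : ℝ) ≤ truncInvSum U c n ω := by
  calc (n : ℝ) = ∑ _i ∈ Finset.range n, (1 : ℝ) := by simp
    _ ≤ truncInvSum U c n ω :=
      Finset.sum_le_sum fun i _ => le_min ((one_le_inv₀ (hω i).1).2 (hω i).2.le) hc

theorem truncInvSum_le_sum_inv (c : ℝ) (n : ℕ) (ω : Ω) :
    truncInvSum U c n ω ≤ ∑ i ∈ Finset.range n, (U i ω)⁻¹ :=
  Finset.sum_le_sum fun _ _ => min_le_left _ _

theorem truncInvSum_eq_sum (c : ℝ) (n : ℕ) :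
    truncInvSum U c n = ∑ i ∈ Finset.range n, fun ω => min (U i ω)⁻¹ c := by
  ext ω
  simp [truncInvSum]

variable [MeasurableSpace Ω] {μ : Measure Ω}

theorem ae_forall_mem_Ioo (hmeas : ∀ i, Measurable (U i))
    (hunif : ∀ i, μ.map (U i) = volume.restrict (Ioo 0 1)) : ∀ᵐ ω ∂μ, ∀ i, U i ω ∈ Ioo (0 : ℝ) 1 :=
  ae_all_iff.2 fun i => ae_mem_Ioo_of_map_eq (hmeas i) (hunif i)

theorem measurable_truncInvSum (hmeas : ∀ i, Measurable (U i)) (c : ℝ) (n : ℕ) :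
    Measurable (truncInvSum U c n) :=
  Finset.measurable_sum _ fun i _ => (hmeas i).inv.min measurable_const

theorem memLp_truncInvSum [IsFiniteMeasure μ] (hmeas : ∀ i, Measurable (U i))
    (hunif : ∀ i, μ.map (U i) = volume.restrict (Ioo 0 1)) {c : ℝ} (hc : 1 ≤ c) (n : ℕ) :
    MemLp (truncInvSum U c n) 2 μ := by
  rw [truncInvSum_eq_sum]
  exact memLp_finsetSum' _ fun i _ => memLp_min_inv (hmeas i) (hunif i) hc

theorem integral_truncInvSum [IsFiniteMeasure μ] (hmeas : ∀ i, Measurable (U i))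
    (hunif : ∀ i, μ.map (U i) = volume.restrict (Ioo 0 1)) {c : ℝ} (hc : 1 ≤ c) (n : ℕ) :
    μ[truncInvSum U c n] = n * (1 + Real.log c) := by
  unfold truncInvSum
  rw [integral_finsetSum _ fun i _ => (memLp_min_inv (hmeas i) (hunif i) hc).integrable one_le_two]
  simp [integral_min_inv (hmeas _) (hunif _) hc]
  ring

theorem variance_truncInvSum_le [IsProbabilityMeasure μ] (hmeas : ∀ i, Measurable (U i))
    (hindep : iIndepFun U μ) (hunif : ∀ i, μ.map (U i) = volume.restrict (Ioo 0 1)) {c : ℝ}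
    (hc : 1 ≤ c) (n : ℕ) :
    Var[truncInvSum U c n; μ] ≤ n * (2 * c) := by
  have hind : iIndepFun (fun i ω => min (U i ω)⁻¹ c) μ :=
    hindep.comp (fun _ x => min x⁻¹ c) fun _ => measurable_inv.min measurable_const
  rw [truncInvSum_eq_sum, IndepFun.variance_sum (fun i _ => memLp_min_inv (hmeas i) (hunif i) hc)
    fun i _ j _ hij => hind.indepFun hij]
  calc ∑ i ∈ Finset.range n, Var[fun ω => min (U i ω)⁻¹ c; μ]
      ≤ ∑ _i ∈ Finset.range n, 2 * c :=
        Finset.sum_le_sum fun i _ => variance_min_inv_le (hmeas i) (hunif i) hc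
    _ = n * (2 * c) := by simp

theorem integrable_harmonicMean [IsFiniteMeasure μ] (hmeas : ∀ i, Measurable (U i))
    (hunif : ∀ i, μ.map (U i) = volume.restrict (Ioo 0 1)) {n : ℕ} (hn : 1 ≤ n) :
    Integrable (fun ω => (n : ℝ) / ∑ i ∈ Finset.range n, (U i ω)⁻¹) μ := by
  have hn0 : (0 : ℝ) < n := by exact_mod_cast hn
  have hge : ∀ᵐ ω ∂μ, (n : ℝ) ≤ ∑ i ∈ Finset.range n, (U i ω)⁻¹ :=
    (ae_forall_mem_Ioo hmeas hunif).mono fun ω hω =>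
      (natCast_le_truncInvSum le_rfl n hω).trans (truncInvSum_le_sum_inv 1 n ω)
  have := (integrable_inv_of_ae_le (Finset.measurable_sum _ fun i _ => (hmeas i).inv).aemeasurable
    hn0 hge).const_mul (n : ℝ)
  simpa [div_eq_mul_inv] using this

theorem integral_harmonicMean_le [IsProbabilityMeasure μ] (hmeas : ∀ i, Measurable (U i))
    (hindep : iIndepFun U μ) (hunif : ∀ i, μ.map (U i) = volume.restrict (Ioo 0 1)) {n : ℕ}
    (hn : 1 ≤ n) :
    ∫ ω, (n : ℝ) / ∑ i ∈ Finset.range n, (U i ω)⁻¹ ∂μ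
      ≤ (1 + Real.log n)⁻¹ + 2 / (1 + Real.log n) ^ 2 := by
  have hn0 : (0 : ℝ) < n := by exact_mod_cast hn
  have hn1 : (1 : ℝ) ≤ n := by exact_mod_cast hn
  have hT_ge : ∀ᵐ ω ∂μ, (n : ℝ) ≤ truncInvSum U n n ω :=
    (ae_forall_mem_Ioo hmeas hunif).mono fun ω hω => natCast_le_truncInvSum hn1 n hω
  have hT := memLp_truncInvSum hmeas hunif hn1 n (μ := μ)
  have hTinv := integrable_inv_of_ae_le (measurable_truncInvSum hmeas _ n).aemeasurable hn0 hT_ge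
  calc ∫ ω, (n : ℝ) / ∑ i ∈ Finset.range n, (U i ω)⁻¹ ∂μ
      ≤ ∫ ω, (n : ℝ) * (truncInvSum U n n ω)⁻¹ ∂μ := by
        refine integral_mono_ae (integrable_harmonicMean hmeas hunif hn) (hTinv.const_mul _) ?_
        filter_upwards [hT_ge] with ω hω
        rw [← div_eq_mul_inv]
        exact div_le_div_of_nonneg_left hn0.le (hn0.trans_le hω) (truncInvSum_le_sum_inv _ n ω)
    _ = n * μ[(truncInvSum U n n)⁻¹] := integral_const_mul _ _
    _ ≤ n * ((μ[truncInvSum U n n])⁻¹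
          + Var[truncInvSum U n n; μ] / (μ[truncInvSum U n n] ^ 2 * n)) :=
        mul_le_mul_of_nonneg_left (integral_inv_le_inv_integral_add_variance hT hn0 hT_ge) hn0.le
    _ ≤ n * ((n * (1 + Real.log n))⁻¹ + n * (2 * n) / ((n * (1 + Real.log n)) ^ 2 * n)) := by
        rw [integral_truncInvSum hmeas hunif hn1]
        gcongr
        exact variance_truncInvSum_le hmeas hindep hunif hn1 n
    _ = (1 + Real.log n)⁻¹ + 2 / (1 + Real.log n) ^ 2 := by
        field_simp

theorem integral_sum_indicator_lt_inv [IsFiniteMeasure μ] (hmeas : ∀ i, Measurable (U i))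
    (hunif : ∀ i, μ.map (U i) = volume.restrict (Ioo 0 1)) {c : ℝ} (hc : 1 ≤ c) (n : ℕ) :
    ∫ ω, ∑ i ∈ Finset.range n, {x : ℝ | c < x⁻¹}.indicator 1 (U i ω) ∂μ = n * c⁻¹ := by
  have hmeas_set : MeasurableSet {x : ℝ | c < x⁻¹} :=
    measurableSet_lt measurable_const measurable_inv
  rw [integral_finsetSum (f := fun i ω => {x : ℝ | c < x⁻¹}.indicator 1 (U i ω)) _ fun i _ =>
    ((integrable_const (1 : ℝ)).indicator hmeas_set).comp_measurable (hmeas i)]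
  simp [integral_indicator_lt_inv (hmeas _) (hunif _) hc]

theorem le_integral_harmonicMean [IsProbabilityMeasure μ] (hmeas : ∀ i, Measurable (U i))
    (hunif : ∀ i, μ.map (U i) = volume.restrict (Ioo 0 1)) {n : ℕ} (hn : 1 ≤ n) {c : ℝ}
    (hc : 1 ≤ c) :
    (1 + Real.log c)⁻¹ - (n / c) ^ 2 ≤ ∫ ω, (n : ℝ) / ∑ i ∈ Finset.range n, (U i ω)⁻¹ ∂μ := by
  have hn0 : (0 : ℝ) < n := by exact_mod_cast hn
  have hc0 : 0 < c := by linarith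
  have hae := ae_forall_mem_Ioo hmeas hunif
  have hT_ge : ∀ᵐ ω ∂μ, (n : ℝ) ≤ truncInvSum U c n ω :=
    hae.mono fun ω hω => natCast_le_truncInvSum hc n hω
  have hTinv : Integrable (fun ω => (truncInvSum U c n ω)⁻¹) μ :=
    integrable_inv_of_ae_le (measurable_truncInvSum hmeas c n).aemeasurable hn0 hT_ge
  have hN_int : Integrable
      (fun ω => ∑ i ∈ Finset.range n, {x : ℝ | c < x⁻¹}.indicator 1 (U i ω)) μ :=
    integrable_finsetSum _ fun i _ => ((integrable_const (1 : ℝ)).indicator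
      (measurableSet_lt measurable_const measurable_inv)).comp_measurable (hmeas i)
  have hJensen : (n * (1 + Real.log c))⁻¹ ≤ ∫ ω, (truncInvSum U c n ω)⁻¹ ∂μ := by
    rw [← integral_truncInvSum hmeas hunif hc]
    exact inv_integral_le_integral_inv ((memLp_truncInvSum hmeas hunif hc n).integrable
      one_le_two) hTinv (hT_ge.mono fun ω h => hn0.trans_le h)
  calc (1 + Real.log c)⁻¹ - (n / c) ^ 2
      = n * (n * (1 + Real.log c))⁻¹ - n / c * (n * c⁻¹) := by
        field_simp
    _ ≤ n * ∫ ω, (truncInvSum U c n ω)⁻¹ ∂μ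
          - n / c * ∫ ω, ∑ i ∈ Finset.range n, {x : ℝ | c < x⁻¹}.indicator 1 (U i ω) ∂μ := by
        rw [integral_sum_indicator_lt_inv hmeas hunif hc]
        gcongr
    _ = ∫ ω, ((n : ℝ) * (truncInvSum U c n ω)⁻¹
          - n / c * ∑ i ∈ Finset.range n, {x : ℝ | c < x⁻¹}.indicator 1 (U i ω)) ∂μ := by
        rw [integral_sub (hTinv.const_mul _) (hN_int.const_mul _), integral_const_mul,
          integral_const_mul]
    _ ≤ _ := by
        refine integral_mono_ae ((hTinv.const_mul _).sub (hN_int.const_mul _))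
          (integrable_harmonicMean hmeas hunif hn) ?_
        filter_upwards [hae] with ω hω
        exact mul_inv_sum_min_sub_le _ (fun i _ => (hω i).1) hn0.le hc0

end Sequence

theorem tendsto_mul_inv_one_add_add_sq :
    Tendsto (fun x : ℝ => x * ((1 + x)⁻¹ + 2 / (1 + x) ^ 2)) atTop (𝓝 1) := by
  have hinv : Tendsto (fun x : ℝ => (1 + x)⁻¹) atTop (𝓝 0) :=
    tendsto_inv_atTop_zero.comp (tendsto_atTop_add_const_left _ 1 tendsto_id)
  have hratio : Tendsto (fun x : ℝ => (x⁻¹ + 1)⁻¹) atTop (𝓝 1) := by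
    simpa using (tendsto_inv_atTop_zero.add_const (1 : ℝ)).inv₀ (by norm_num)
  have := hratio.add ((hratio.const_mul 2).mul hinv)
  rw [mul_zero, add_zero] at this
  refine this.congr' ((eventually_gt_atTop 0).mono fun x hx => ?_)
  field_simp

theorem tendsto_mul_inv_one_add_add_log_sub :
    Tendsto (fun x : ℝ => x * ((1 + x + Real.log x)⁻¹ - (x⁻¹) ^ 2)) atTop (𝓝 1) := by
  have hlog : Tendsto (fun x : ℝ => Real.log x / x) atTop (𝓝 0) :=
    Real.isLittleO_log_id_atTop.tendsto_div_nhds_zero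
  have := (((tendsto_inv_atTop_zero.add_const 1).add hlog).inv₀ (by norm_num)).sub
    tendsto_inv_atTop_zero
  simp only [zero_add, add_zero, inv_one, sub_zero] at this
  refine this.congr' ((eventually_gt_atTop 0).mono fun x hx => ?_)
  field_simp

/-- Let `U 0, U 1, …` be i.i.d. random variables uniformly distributed on
`(0,1)`. Then `(ln n) · E[n / (1/U_1 + ⋯ + 1/U_n)] → 1` as `n → ∞`. -/
theorem stmt8 {Ω : Type*} [MeasureSpace Ω] [IsProbabilityMeasure (ℙ : Measure Ω)]
    (U : ℕ → Ω → ℝ) (hmeas : ∀ i, Measurable (U i))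
    (hindep : iIndepFun U ℙ)
    (hunif : ∀ i, Measure.map (U i) ℙ = volume.restrict (Ioo (0:ℝ) 1)) :
    Tendsto (fun n : ℕ =>
      Real.log n * ∫ ω, (n : ℝ) / (∑ i ∈ Finset.range n, (U i ω)⁻¹) ∂ℙ) atTop (𝓝 1) := by
  have hlog : Tendsto (fun n : ℕ => Real.log n) atTop atTop :=
    Real.tendsto_log_atTop.comp tendsto_natCast_atTop_atTop
  refine tendsto_of_tendsto_of_tendsto_of_le_of_le' (tendsto_mul_inv_one_add_add_log_sub.comp hlog)
    (tendsto_mul_inv_one_add_add_sq.comp hlog) ?_ ?_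
  · filter_upwards [eventually_ge_atTop 3] with n hn
    have hn0 : (0 : ℝ) < n := by positivity
    have hL : 1 ≤ Real.log n := by
      rw [Real.le_log_iff_exp_le hn0]
      have h3 : (3 : ℝ) ≤ n := by exact_mod_cast hn
      linarith [Real.exp_one_lt_d9]
    have hn1 : (1 : ℝ) ≤ n := by exact_mod_cast (by omega : 1 ≤ n)
    have hbound := le_integral_harmonicMean (μ := ℙ) hmeas hunif (n := n) (by omega)
      (one_le_mul_of_one_le_of_one_le hn1 hL)
    rw [Real.log_mul hn0.ne' (by positivity), div_mul_cancel_left₀ hn0.ne', ← add_assoc] at hbound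
    exact mul_le_mul_of_nonneg_left hbound (by positivity)
  · filter_upwards [eventually_ge_atTop 1] with n hn
    exact mul_le_mul_of_nonneg_left (integral_harmonicMean_le hmeas hindep hunif hn)
      (Real.log_nonneg (by exact_mod_cast hn))
end

section
/- Suppose the Δ_k have the discrete Pareto distribution P(Δ_1 = k) = k^{−2}/ζ(2) for k = 1, 2, 3, … (the case α = 1). Then the autocovariance function of the sampled process satisfies σ_Y(h) ∼ C̃_d (6/π²)^{2d−1} h^{2d−1} (log h)^{2d−1} as h → ∞. -/
open MeasureTheory ProbabilityTheory Filter Set Topology Asymptotics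
open scoped ENNReal ProbabilityTheory

/-!
Write `c = 6/π²`, so that `P(Δ > j) ≈ c/j`, and `a_h = c h log h`. Truncating the `Δ_i` at
`M = ⌈h log h⌉` leaves summands of mean `c log h + O(log log h)` and second moment `O(M)`; all `h`
of them stay below `M` except with probability `h c/M = O(1/log h)`. Chebyshev's inequality then
gives `P(|T_h - a_h| ≥ ε a_h) = O(1/log h)`, a weak law of large numbers with a rate.

Since `T_h ≥ h` and `x ↦ x^(2d-1)` is decreasing, the event `T_h < (1-ε) a_h` contributes at most
`h^(2d-1) · O(1/log h) = a_h^(2d-1) · O((log h)^(-2d))` to `E[T_h^(2d-1)]`, which is negligible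
because `d > 0`; hence `E[T_h^(2d-1)] ∼ a_h^(2d-1)`. Finally `σ_X(x) ∼ C̃_d x^(2d-1)` transfers to
`E[σ_X(T_h)] ∼ C̃_d E[T_h^(2d-1)]` because `T_h ≥ h` tends to infinity uniformly in `ω`.
-/

lemma hasSum_sub_succ_of_antitone {f : ℕ → ℝ} (hf : Antitone f)
    (hlim : Tendsto f atTop (𝓝 0)) : HasSum (fun k => f k - f (k + 1)) (f 0) := by
  rw [hasSum_iff_tendsto_nat_of_nonneg (fun k => sub_nonneg.2 (hf k.le_succ))]
  simp_rw [Finset.sum_range_sub']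
  simpa using tendsto_const_nhds.sub hlim

lemma hasSum_inv_mul_add_one {x : ℝ} (hx : 0 < x) :
    HasSum (fun k : ℕ => ((x + k) * (x + k + 1))⁻¹) x⁻¹ := by
  have hpos (k : ℕ) : 0 < x + k := by positivity
  convert hasSum_sub_succ_of_antitone (f := fun k : ℕ => (x + k)⁻¹)
    (fun m n hmn => inv_anti₀ (hpos m) (by gcongr))
    (tendsto_inv_atTop_zero.comp (tendsto_atTop_add_const_left _ x tendsto_natCast_atTop_atTop))
    using 1
  · funext k
    have := hpos k
    push_cast
    field_simp
    ring
  · simp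

lemma eventually_one_le_log_natCast : ∀ᶠ h : ℕ in atTop, 1 ≤ Real.log h :=
  (Real.tendsto_log_atTop.comp tendsto_natCast_atTop_atTop).eventually_ge_atTop 1

lemma one_le_natCast_of_one_le_log {h : ℕ} (hlog : 1 ≤ Real.log h) : (1 : ℝ) ≤ h := by
  rcases h.eq_zero_or_pos with rfl | hh
  · norm_num at hlog
  · exact_mod_cast hh

lemma le_natCeil_mul_log_le {h : ℕ} (hlog : 1 ≤ Real.log h) :
    (h : ℝ) * Real.log h ≤ ⌈(h : ℝ) * Real.log h⌉₊ ∧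
      (⌈(h : ℝ) * Real.log h⌉₊ : ℝ) ≤ 2 * (h * Real.log h) := by
  have hh := one_le_natCast_of_one_le_log hlog
  refine ⟨Nat.le_ceil _, (Nat.ceil_lt_add_one (by positivity)).le.trans ?_⟩
  nlinarith

lemma eventually_add_mul_log_le (A B : ℝ) {δ : ℝ} (hδ : 0 < δ) :
    ∀ᶠ x : ℝ in atTop, A + B * Real.log x ≤ δ * x := by
  filter_upwards [((isLittleO_const_id_atTop A).add
    (Real.isLittleO_log_id_atTop.const_mul_left B)).bound hδ, eventually_ge_atTop 0]
    with x hx hx0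
  simp only [id, Real.norm_eq_abs, abs_of_nonneg hx0] at hx
  exact (le_abs_self _).trans hx

section ParetoTail

variable {Ω : Type*} [MeasurableSpace Ω] {μ : Measure Ω} [IsFiniteMeasure μ] {D : Ω → ℕ}
  {c : ℝ}

lemma hasSum_measureReal_lt (hD : Measurable D) (j : ℕ) :
    HasSum (fun k : ℕ => μ.real {ω | D ω = j + 1 + k}) (μ.real {ω | j < D ω}) := by
  have hunion : {ω | j < D ω} = ⋃ k : ℕ, {ω | D ω = j + 1 + k} := by
    ext ω
    simp only [mem_ofPred_eq, mem_iUnion]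
    exact ⟨fun h => ⟨D ω - (j + 1), by omega⟩, fun ⟨k, hk⟩ => by omega⟩
  have hdisj : Pairwise (Function.onFun Disjoint fun k : ℕ => {ω | D ω = j + 1 + k}) :=
    fun a b hab => Set.disjoint_left.2 fun ω ha hb => hab (by simp_all)
  have hmeas (k : ℕ) : MeasurableSet {ω | D ω = j + 1 + k} := hD (measurableSet_singleton _)
  have hsum : ∑' k : ℕ, μ {ω | D ω = j + 1 + k} ≠ ∞ := by
    rw [← measure_iUnion hdisj hmeas]; finiteness
  rw [measureReal_def, hunion, measure_iUnion hdisj hmeas,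
    ENNReal.tsum_toReal_eq fun _ => measure_ne_top _ _]
  exact (ENNReal.summable_toReal hsum).hasSum

variable (hD : Measurable D) (hpareto : ∀ k : ℕ, 1 ≤ k → μ.real {ω | D ω = k} = c / k ^ 2)
include hD hpareto

lemma hasSum_pareto_tail (j : ℕ) :
    HasSum (fun k : ℕ => c * (((j + 1 : ℝ) + k) ^ 2)⁻¹) (μ.real {ω | j < D ω}) := by
  convert hasSum_measureReal_lt (μ := μ) hD j using 2 with k
  rw [hpareto _ (by omega)]
  push_cast
  ring

lemma pareto_tail_ge (hc : 0 ≤ c) (j : ℕ) : c / (j + 1) ≤ μ.real {ω | j < D ω} := by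
  have hx : (0 : ℝ) < j + 1 := by positivity
  rw [div_eq_mul_inv]
  refine hasSum_le (fun k => ?_) ((hasSum_inv_mul_add_one hx).mul_left c)
    (hasSum_pareto_tail hD hpareto j)
  gcongr
  linarith

lemma pareto_tail_le (hc : 0 ≤ c) {j : ℕ} (hj : 1 ≤ j) : μ.real {ω | j < D ω} ≤ c / j := by
  have hx : (0 : ℝ) < j := by exact_mod_cast hj
  rw [div_eq_mul_inv]
  refine hasSum_le (fun k => ?_) (hasSum_pareto_tail hD hpareto j)
    ((hasSum_inv_mul_add_one hx).mul_left c)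
  gcongr
  nlinarith

end ParetoTail

section Truncation

variable {Ω : Type*} [MeasurableSpace Ω] {μ : Measure Ω} [IsProbabilityMeasure μ] {D : Ω → ℕ}

lemma apply_min_sub_apply_zero_eq_sum (f : ℕ → ℝ) (n M : ℕ) :
    f (min n M) - f 0 = ∑ j ∈ Finset.range M, if j < n then f (j + 1) - f j else 0 := by
  rw [← Finset.sum_filter, ← Finset.sum_range_sub]
  congr 1
  ext j
  simp [and_comm]

lemma integral_comp_min_eq (hD : Measurable D) (f : ℕ → ℝ) (M : ℕ) :
    ∫ ω, f (min (D ω) M) ∂μ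
      = f 0 + ∑ j ∈ Finset.range M, (f (j + 1) - f j) * μ.real {ω | j < D ω} := by
  have hset (j : ℕ) : MeasurableSet {ω | j < D ω} := hD measurableSet_Ioi
  have hint (j : ℕ) : Integrable ({ω | j < D ω}.indicator fun _ => f (j + 1) - f j) μ :=
    (integrable_const _).indicator (hset j)
  have hpt : (fun ω => f (min (D ω) M)) = fun ω =>
      f 0 + ∑ j ∈ Finset.range M, {ω | j < D ω}.indicator (fun _ => f (j + 1) - f j) ω := by
    funext ω
    rw [← sub_eq_iff_eq_add', apply_min_sub_apply_zero_eq_sum]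
    simp [Set.indicator_apply]
  rw [hpt, integral_add (integrable_const _) (integrable_finsetSum _ fun j _ => hint j),
    integral_finsetSum _ fun j _ => hint j]
  simp [integral_indicator_const _ (hset _), mul_comm]

variable {c : ℝ} (hD : Measurable D)
  (hpareto : ∀ k : ℕ, 1 ≤ k → μ.real {ω | D ω = k} = c / k ^ 2)
include hD hpareto

lemma pareto_integral_min_ge (hc : 0 ≤ c) (M : ℕ) :
    c * Real.log (M + 1) ≤ ∫ ω, ((min (D ω) M : ℕ) : ℝ) ∂μ := by
  rw [integral_comp_min_eq hD (fun k => (k : ℝ)) M]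
  calc c * Real.log (M + 1) ≤ c * harmonic M := by
        gcongr
        exact_mod_cast log_add_one_le_harmonic M
    _ = ∑ j ∈ Finset.range M, c / (j + 1) := by
        simp [harmonic, Finset.mul_sum, div_eq_mul_inv]
    _ ≤ _ := by
        simp only [Nat.cast_add, Nat.cast_one, add_sub_cancel_left, one_mul, Nat.cast_zero,
          zero_add]
        gcongr with j
        exact pareto_tail_ge hD hpareto hc j

lemma pareto_integral_min_le (hc : 0 ≤ c) (M : ℕ) :
    ∫ ω, ((min (D ω) M : ℕ) : ℝ) ∂μ ≤ c * (1 + Real.log M) + 1 := by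
  rw [integral_comp_min_eq hD (fun k => (k : ℝ)) M]
  rcases M with _ | n
  · simp only [Nat.cast_zero, Finset.range_zero, Finset.sum_empty, add_zero, Real.log_zero]
    linarith
  rw [Finset.sum_range_succ']
  simp only [Nat.cast_add, Nat.cast_one, add_sub_cancel_left, one_mul, Nat.cast_zero, zero_add]
  have htail : ∑ j ∈ Finset.range n, μ.real {ω | j + 1 < D ω} ≤ c * harmonic n := by
    simp only [harmonic, Rat.cast_sum, Finset.mul_sum]
    gcongr with j
    have := pareto_tail_le hD hpareto hc (j := j + 1) (by omega)
    push_cast at this ⊢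
    simpa [div_eq_mul_inv] using this
  have hlog : Real.log n ≤ Real.log (n + 1) := by
    rcases n.eq_zero_or_pos with rfl | hn
    · simp
    · exact Real.log_le_log (by positivity) (by linarith)
  nlinarith [harmonic_le_one_add_log n, measureReal_le_one (μ := μ) (s := {ω | 0 < D ω})]

lemma pareto_integral_min_sq_le (hc : 0 ≤ c) (M : ℕ) :
    ∫ ω, ((min (D ω) M : ℕ) : ℝ) ^ 2 ∂μ ≤ (1 + 3 * c) * M := by
  rw [integral_comp_min_eq hD (fun k => (k : ℝ) ^ 2) M]
  rcases M with _ | n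
  · simp
  rw [Finset.sum_range_succ']
  have hterm (j : ℕ) : (((j + 1 + 1 : ℕ) : ℝ) ^ 2 - ((j + 1 : ℕ) : ℝ) ^ 2)
      * μ.real {ω | j + 1 < D ω} ≤ 3 * c := by
    have htail := pareto_tail_le hD hpareto hc (j := j + 1) (by omega)
    have hj : (0 : ℝ) < j + 1 := by positivity
    push_cast at htail ⊢
    calc ((j + 1 + 1 : ℝ) ^ 2 - (j + 1) ^ 2) * μ.real {ω | j + 1 < D ω}
        ≤ (2 * j + 3) * (c / (j + 1)) := by
          nlinarith [measureReal_nonneg (μ := μ) (s := {ω | j + 1 < D ω})]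
      _ ≤ 3 * c := by rw [mul_div, div_le_iff₀ hj]; nlinarith
  have := Finset.sum_le_sum fun j (_ : j ∈ Finset.range n) => hterm j
  simp only [Finset.sum_const, Finset.card_range, nsmul_eq_mul] at this
  push_cast at this ⊢
  nlinarith [measureReal_le_one (μ := μ) (s := {ω | 0 < D ω})]

lemma pareto_integral_min_ceil_ge (hc : 0 ≤ c) {h : ℕ} (hlog : 1 ≤ Real.log h) :
    c * h * Real.log h ≤ h * ∫ ω, ((min (D ω) ⌈(h : ℝ) * Real.log h⌉₊ : ℕ) : ℝ) ∂μ := by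
  obtain ⟨hM, -⟩ := le_natCeil_mul_log_le hlog
  have hh : (0 : ℝ) < h := zero_lt_one.trans_le (one_le_natCast_of_one_le_log hlog)
  have hm := pareto_integral_min_ge hD hpareto hc ⌈(h : ℝ) * Real.log h⌉₊
  have hlogM : Real.log h ≤ Real.log (⌈(h : ℝ) * Real.log h⌉₊ + 1) :=
    Real.log_le_log hh (by nlinarith)
  nlinarith [mul_le_mul_of_nonneg_left hlogM (by positivity : 0 ≤ c * h)]

lemma pareto_integral_min_ceil_le (hc : 0 < c) {δ : ℝ} (hδ : 0 < δ) :
    ∀ᶠ h : ℕ in atTop, h * ∫ ω, ((min (D ω) ⌈(h : ℝ) * Real.log h⌉₊ : ℕ) : ℝ) ∂μ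
      ≤ (1 + δ) * (c * h * Real.log h) := by
  filter_upwards [eventually_one_le_log_natCast,
    (Real.tendsto_log_atTop.comp tendsto_natCast_atTop_atTop).eventually
      (eventually_add_mul_log_le (c * (1 + Real.log 2) + 1) c (mul_pos hδ hc))]
    with h hlog hsmall
  simp only [Function.comp_apply] at hsmall
  obtain ⟨hM₁, hM₂⟩ := le_natCeil_mul_log_le hlog
  have hh : (0 : ℝ) < h := zero_lt_one.trans_le (one_le_natCast_of_one_le_log hlog)
  have hm := pareto_integral_min_le hD hpareto hc.le ⌈(h : ℝ) * Real.log h⌉₊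
  have hlogM : Real.log ⌈(h : ℝ) * Real.log h⌉₊
      ≤ Real.log 2 + Real.log h + Real.log (Real.log h) := by
    rw [← Real.log_mul (by norm_num) hh.ne', ← Real.log_mul (by positivity) (by positivity)]
    exact Real.log_le_log (by nlinarith) (by linarith)
  have hm' : ∫ ω, ((min (D ω) ⌈(h : ℝ) * Real.log h⌉₊ : ℕ) : ℝ) ∂μ
      ≤ (1 + δ) * (c * Real.log h) := by
    nlinarith [mul_le_mul_of_nonneg_left hlogM hc.le]
  nlinarith [mul_le_mul_of_nonneg_left hm' hh.le]

end Truncation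

lemma measureReal_sum_ge_le_variance_div_sq {Ω : Type*} [MeasurableSpace Ω] {μ : Measure Ω}
    [IsProbabilityMeasure μ] {X : ℕ → Ω → ℝ} (hX : MemLp (X 0) 2 μ)
    (hindep : Pairwise fun i j => IndepFun (X i) (X j) μ)
    (hident : ∀ i, IdentDistrib (X i) (X 0) μ μ) (n : ℕ) {t : ℝ} (ht : 0 < t) :
    μ.real {ω | t ≤ |∑ i ∈ Finset.range n, X i ω - (n : ℝ) * μ[X 0]|}
      ≤ n * Var[X 0; μ] / t ^ 2 := by
  have hXi (i : ℕ) : MemLp (X i) 2 μ := (hident i).memLp_iff.2 hX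
  set S := ∑ i ∈ Finset.range n, X i with hS
  have hSapp (ω : Ω) : S ω = ∑ i ∈ Finset.range n, X i ω := Finset.sum_apply _ _ _
  have hmean : μ[S] = (n : ℝ) * μ[X 0] := by
    simp only [hSapp]
    rw [integral_finsetSum _ fun i _ => (hXi i).integrable one_le_two]
    simp [fun i => (hident i).integral_eq]
  have hvar : Var[S; μ] = n * Var[X 0; μ] := by
    rw [hS, IndepFun.variance_sum (fun i _ => hXi i) fun i _ j _ hij => hindep hij]
    simp [fun i => (hident i).variance_eq]
  have hSmem : MemLp S 2 μ := memLp_finsetSum' _ fun i _ => hXi i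
  have := meas_ge_le_variance_div_sq hSmem ht
  rw [hmean, hvar] at this
  simp only [hSapp] at this
  exact ENNReal.toReal_le_of_le_ofReal
    (div_nonneg (mul_nonneg n.cast_nonneg (variance_nonneg _ _)) (sq_nonneg t)) this

section TruncatedSum

variable {Ω : Type*}

noncomputable def truncSum (Δ : ℕ → Ω → ℕ) (M h : ℕ) (ω : Ω) : ℝ :=
  ∑ i ∈ Finset.range h, ((min (Δ i ω) M : ℕ) : ℝ)

variable {Δ : ℕ → Ω → ℕ}

lemma truncSum_le (M h : ℕ) (ω : Ω) :
    truncSum Δ M h ω ≤ ((∑ i ∈ Finset.range h, Δ i ω : ℕ) : ℝ) := by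
  unfold truncSum
  push_cast
  gcongr
  exact min_le_left _ _

lemma truncSum_eq {M h : ℕ} {ω : Ω} (hω : ∀ i < h, Δ i ω ≤ M) :
    truncSum Δ M h ω = ((∑ i ∈ Finset.range h, Δ i ω : ℕ) : ℝ) := by
  rw [truncSum, Nat.cast_sum]
  refine Finset.sum_congr rfl fun i hi => ?_
  rw [min_eq_left (hω i (Finset.mem_range.1 hi))]

lemma le_sum_range_of_pos (hpos : ∀ i ω, 0 < Δ i ω) (h : ℕ) (ω : Ω) :
    h ≤ ∑ i ∈ Finset.range h, Δ i ω := by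
  simpa using Finset.card_nsmul_le_sum (Finset.range h) (Δ · ω) 1 fun i _ => hpos i ω

end TruncatedSum

section RpowMoments

variable {Ω : Type*} [MeasurableSpace Ω] {μ : Measure Ω} [IsProbabilityMeasure μ] {X : Ω → ℝ}
  {b β : ℝ} (hX : Measurable X) (hb : 0 < b) (hXb : ∀ ω, b ≤ X ω) (hβ : β ≤ 0)
include hX hb hXb hβ

lemma integrable_rpow_of_le : Integrable (fun ω => X ω ^ β) μ :=
  (integrable_const (b ^ β)).mono' (hX.pow_const β).aestronglyMeasurable <| ae_of_all _ fun ω => by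
    rw [Real.norm_of_nonneg (Real.rpow_nonneg (hb.le.trans (hXb ω)) β)]
    exact Real.rpow_le_rpow_of_nonpos hb (hXb ω) hβ

lemma integral_rpow_le_add_measureReal {s : ℝ} (hs : 0 < s) :
    ∫ ω, X ω ^ β ∂μ ≤ s ^ β + μ.real {ω | X ω < s} * b ^ β := by
  have hset : MeasurableSet {ω | X ω < s} := hX measurableSet_Iio
  have hpt (ω : Ω) : X ω ^ β ≤ s ^ β + {ω | X ω < s}.indicator (fun _ => b ^ β) ω := by
    by_cases hω : X ω < s
    · rw [indicator_of_mem (show ω ∈ {ω | X ω < s} from hω)]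
      linarith [Real.rpow_le_rpow_of_nonpos hb (hXb ω) hβ, Real.rpow_nonneg hs.le β]
    · rw [indicator_of_notMem (show ω ∉ {ω | X ω < s} from hω), add_zero]
      exact Real.rpow_le_rpow_of_nonpos hs (not_lt.1 hω) hβ
  calc ∫ ω, X ω ^ β ∂μ ≤ ∫ ω, (s ^ β + {ω | X ω < s}.indicator (fun _ => b ^ β) ω) ∂μ :=
        integral_mono (integrable_rpow_of_le hX hb hXb hβ)
          ((integrable_const _).add ((integrable_const _).indicator hset)) hpt
    _ = s ^ β + μ.real {ω | X ω < s} * b ^ β := by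
        rw [integral_add (integrable_const _) ((integrable_const _).indicator hset),
          integral_indicator_const _ hset]
        simp

lemma mul_measureReal_le_integral_rpow {s : ℝ} :
    s ^ β * μ.real {ω | X ω ≤ s} ≤ ∫ ω, X ω ^ β ∂μ := by
  have hset : MeasurableSet {ω | X ω ≤ s} := hX measurableSet_Iic
  have hpt (ω : Ω) : {ω | X ω ≤ s}.indicator (fun _ => s ^ β) ω ≤ X ω ^ β := by
    by_cases hω : X ω ≤ s
    · rw [indicator_of_mem (show ω ∈ {ω | X ω ≤ s} from hω)]
      exact Real.rpow_le_rpow_of_nonpos (hb.trans_le (hXb ω)) hω hβ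
    · rw [indicator_of_notMem (show ω ∉ {ω | X ω ≤ s} from hω)]
      exact Real.rpow_nonneg (hb.le.trans (hXb ω)) β
  calc s ^ β * μ.real {ω | X ω ≤ s} = ∫ ω, {ω | X ω ≤ s}.indicator (fun _ => s ^ β) ω ∂μ := by
        rw [integral_indicator_const _ hset, smul_eq_mul, mul_comm]
    _ ≤ ∫ ω, X ω ^ β ∂μ :=
        integral_mono ((integrable_const _).indicator hset) (integrable_rpow_of_le hX hb hXb hβ) hpt

end RpowMoments

lemma exists_abs_rpow_one_add_sub_one_lt {β δ : ℝ} (hδ : 0 < δ) :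
    ∃ ε, 0 < ε ∧ ε < 1 ∧ |(1 + ε) ^ β - 1| < δ ∧ |(1 - ε) ^ β - 1| < δ := by
  have hcont : ContinuousAt (fun t : ℝ => (1 + t) ^ β) 0 :=
    (continuousAt_const.add continuousAt_id).rpow_const (Or.inl (by norm_num))
  obtain ⟨r, hr, hball⟩ := Metric.eventually_nhds_iff.1
    (Metric.tendsto_nhds.1 hcont.tendsto δ hδ)
  have hclose {t : ℝ} (ht : |t| < r) : |(1 + t) ^ β - 1| < δ := by
    simpa [Real.dist_eq] using hball (y := t) (by simpa [Real.dist_eq] using ht)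
  set ε := min (r / 2) (1 / 2)
  have hε0 : 0 < ε := by positivity
  have hεr : |ε| < r := by
    rw [abs_of_pos hε0]
    linarith [min_le_left (r / 2) (1 / 2 : ℝ)]
  refine ⟨ε, hε0, by linarith [min_le_right (r / 2) (1 / 2 : ℝ)], hclose hεr, ?_⟩
  rw [sub_eq_add_neg]
  exact hclose (by rwa [abs_neg])

theorem isEquivalent_integral_rpow_of_concentration {Ω : Type*} [MeasurableSpace Ω]
    {μ : Measure Ω} [IsProbabilityMeasure μ] {X : ℕ → Ω → ℝ} {a b : ℕ → ℝ} {β : ℝ}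
    (hβ : β ≤ 0) (hX : ∀ h, Measurable (X h)) (hb : ∀ᶠ h in atTop, 0 < b h)
    (hXb : ∀ h ω, b h ≤ X h ω) (ha : ∀ᶠ h in atTop, 0 < a h)
    -- on `{X h < (1 - ε) * a h}` only `X h ^ β ≤ b h ^ β = a h ^ β / (a h / b h) ^ β` is known
    (hlow : ∀ ε > 0,
      (fun h => μ.real {ω | X h ω < (1 - ε) * a h}) =o[atTop] fun h => (a h / b h) ^ β)
    (hup : ∀ ε > 0, Tendsto (fun h => μ.real {ω | (1 + ε) * a h < X h ω}) atTop (𝓝 0)) :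
    (fun h => ∫ ω, X h ω ^ β ∂μ) ~[atTop] fun h => a h ^ β := by
  rw [IsEquivalent, isLittleO_iff]
  intro δ hδ
  obtain ⟨ε, hε0, hε1, hplus, hminus⟩ := exists_abs_rpow_one_add_sub_one_lt (β := β) (half_pos hδ)
  filter_upwards [hb, ha, (hlow ε hε0).bound (half_pos hδ),
    (hup ε hε0).eventually (eventually_le_nhds (half_pos hδ))] with h hbh hah hlowh huph
  have hab : (a h / b h) ^ β * b h ^ β = a h ^ β := by
    rw [Real.div_rpow hah.le hbh.le, div_mul_cancel₀ _ (Real.rpow_pos_of_pos hbh β).ne']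
  have haβ : 0 < a h ^ β := Real.rpow_pos_of_pos hah β
  have hbβ : 0 ≤ b h ^ β := (Real.rpow_pos_of_pos hbh β).le
  rw [Real.norm_of_nonneg measureReal_nonneg, Real.norm_of_nonneg (by positivity)] at hlowh
  have hupper := integral_rpow_le_add_measureReal (μ := μ) (hX h) hbh (hXb h) hβ
    (s := (1 - ε) * a h) (by nlinarith)
  have hlower := mul_measureReal_le_integral_rpow (μ := μ) (hX h) hbh (hXb h) hβ
    (s := (1 + ε) * a h)
  have hcompl : μ.real {ω | X h ω ≤ (1 + ε) * a h} = 1 - μ.real {ω | (1 + ε) * a h < X h ω} := by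
    rw [← probReal_compl_eq_one_sub (measurableSet_lt measurable_const (hX h))]
    congr 1
    ext ω
    simp
  rw [Real.mul_rpow (by linarith) hah.le] at hupper hlower
  rw [hcompl] at hlower
  rw [Real.norm_eq_abs, Real.norm_of_nonneg haβ.le, Pi.sub_apply, abs_le]
  obtain ⟨hplus₁, -⟩ := abs_lt.1 hplus
  obtain ⟨-, hminus₂⟩ := abs_lt.1 hminus
  have hP := measureReal_le_one (μ := μ) (s := {ω | (1 + ε) * a h < X h ω})
  have hP₀ := measureReal_nonneg (μ := μ) (s := {ω | (1 + ε) * a h < X h ω})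
  have hmiss : -(δ / 2) ≤ ((1 + ε) ^ β - 1) * (1 - μ.real {ω | (1 + ε) * a h < X h ω}) := by
    rcases le_or_gt 0 ((1 + ε) ^ β - 1) with hpos | hneg
    · nlinarith
    · nlinarith
  constructor
  · nlinarith [mul_le_mul_of_nonneg_left hmiss haβ.le]
  · nlinarith [mul_le_mul_of_nonneg_right hlowh hbβ]

lemma isLittleO_inv_mul_rpow {β c : ℝ} (hβ : -1 < β) (hc : 0 < c) :
    (fun x : ℝ => x⁻¹) =o[atTop] fun x => (c * x) ^ β := by
  refine (isLittleO_iff_tendsto' ?_).2 ?_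
  · filter_upwards [eventually_gt_atTop 0] with x hx h0
    exact absurd h0 (Real.rpow_pos_of_pos (by positivity) β).ne'
  · have hlim := (tendsto_rpow_neg_atTop (by linarith : 0 < 1 + β)).const_mul (c ^ (-β))
    rw [mul_zero] at hlim
    refine hlim.congr' ?_
    filter_upwards [eventually_gt_atTop 0] with x hx
    rw [Real.mul_rpow hc.le hx.le, Real.rpow_neg hx.le, Real.rpow_add hx, Real.rpow_one,
      Real.rpow_neg hc.le]
    field_simp

/-- `f` and `g` need not be measurable: `T h` is `ℕ`-valued. -/
theorem isEquivalent_integral_comp_of_isEquivalent {Ω : Type*} [MeasurableSpace Ω]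
    {μ : Measure Ω} {f g : ℝ → ℝ} (hfg : f ~[atTop] g) (hg : ∀ᶠ x in atTop, 0 ≤ g x)
    {T : ℕ → Ω → ℕ} (hT : ∀ h, Measurable (T h)) (hTh : ∀ h ω, h ≤ T h ω)
    (hint : ∀ᶠ h in atTop, Integrable (fun ω => g (T h ω)) μ) :
    (fun h => ∫ ω, f (T h ω) ∂μ) ~[atTop] fun h => ∫ ω, g (T h ω) ∂μ := by
  rw [IsEquivalent, isLittleO_iff]
  intro ε hε
  obtain ⟨x₀, hx₀⟩ := eventually_atTop.1 ((hfg.isLittleO.bound hε).and hg)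
  filter_upwards [hint, tendsto_natCast_atTop_atTop.eventually_ge_atTop x₀] with h hgi hh
  have hbound (ω : Ω) : ‖f (T h ω) - g (T h ω)‖ ≤ ε * g (T h ω) := by
    obtain ⟨hfg, hg⟩ := hx₀ _ (hh.trans (Nat.cast_le.2 (hTh h ω)))
    rwa [Real.norm_of_nonneg hg] at hfg
  have hgnn (ω : Ω) : 0 ≤ g (T h ω) := (hx₀ _ (hh.trans (Nat.cast_le.2 (hTh h ω)))).2
  have hdiff : Integrable (fun ω => f (T h ω) - g (T h ω)) μ :=
    (hgi.const_mul ε).mono'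
      ((measurable_from_nat (f := fun n : ℕ => f n - g n)).comp (hT h)).aestronglyMeasurable
      (ae_of_all _ hbound)
  have hfi : Integrable (fun ω => f (T h ω)) μ :=
    (hdiff.add hgi).congr (ae_of_all _ fun ω => by simp)
  rw [Pi.sub_apply, ← integral_sub hfi hgi, Real.norm_of_nonneg (integral_nonneg hgnn),
    ← integral_const_mul]
  exact norm_integral_le_of_norm_le (hgi.const_mul ε) (ae_of_all _ hbound)

section ParetoSums

variable {Ω : Type*} [MeasurableSpace Ω] {μ : Measure Ω} [IsProbabilityMeasure μ]
  {Δ : ℕ → Ω → ℕ} {c : ℝ} (hmeas : ∀ i, Measurable (Δ i)) (hindep : iIndepFun Δ μ)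
  (hident : ∀ i, IdentDistrib (Δ i) (Δ 0) μ μ)
  (hpareto : ∀ k : ℕ, 1 ≤ k → μ.real {ω | Δ 0 ω = k} = c / k ^ 2) (hc : 0 < c)
include hmeas hindep hident hpareto hc

lemma pareto_truncSum_deviation_le (M h : ℕ) {t : ℝ} (ht : 0 < t) :
    μ.real {ω | t ≤ |truncSum Δ M h ω - h * ∫ ω, ((min (Δ 0 ω) M : ℕ) : ℝ) ∂μ|}
      ≤ (1 + 3 * c) * h * M / t ^ 2 := by
  set g : ℕ → ℝ := fun n => ((min n M : ℕ) : ℝ)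
  have hg : Measurable g := measurable_from_nat
  have hX : MemLp (fun ω => g (Δ 0 ω)) 2 μ :=
    MemLp.of_bound (hg.comp (hmeas 0)).aestronglyMeasurable M (ae_of_all _ fun ω => by
      simp [g, abs_of_nonneg])
  have hvar : Var[fun ω => g (Δ 0 ω); μ] ≤ (1 + 3 * c) * M :=
    (variance_le_expectation_sq (hg.comp (hmeas 0)).aestronglyMeasurable).trans
      (pareto_integral_min_sq_le (hmeas 0) hpareto hc.le M)
  calc _ ≤ h * Var[fun ω => g (Δ 0 ω); μ] / t ^ 2 :=
        measureReal_sum_ge_le_variance_div_sq (X := fun i ω => g (Δ i ω)) hX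
          (fun i j hij => (hindep.comp (fun _ => g) fun _ => hg).indepFun hij)
          (fun i => (hident i).comp hg) h ht
    _ ≤ h * ((1 + 3 * c) * M) / t ^ 2 := by gcongr
    _ = (1 + 3 * c) * h * M / t ^ 2 := by ring

theorem pareto_sum_lower_deviation_isBigO {ε : ℝ} (hε : 0 < ε) :
    (fun h : ℕ => μ.real {ω | ((∑ i ∈ Finset.range h, Δ i ω : ℕ) : ℝ)
      < (1 - ε) * (c * h * Real.log h)}) =O[atTop] fun h => (Real.log h)⁻¹ := by
  refine IsBigO.of_bound (2 * (1 + 3 * c) / (ε * c) ^ 2) ?_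
  filter_upwards [eventually_one_le_log_natCast] with h hlog
  obtain ⟨-, hM⟩ := le_natCeil_mul_log_le hlog
  have hmean := pareto_integral_min_ceil_ge (hmeas 0) hpareto hc.le hlog
  set M := ⌈(h : ℝ) * Real.log h⌉₊
  set m := ∫ ω, ((min (Δ 0 ω) M : ℕ) : ℝ) ∂μ
  have hh : (0 : ℝ) < h := zero_lt_one.trans_le (one_le_natCast_of_one_le_log hlog)
  have hsub : {ω | ((∑ i ∈ Finset.range h, Δ i ω : ℕ) : ℝ) < (1 - ε) * (c * h * Real.log h)}
      ⊆ {ω | ε * (c * h * Real.log h) ≤ |truncSum Δ M h ω - h * m|} := by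
    intro ω hω
    have := truncSum_le (Δ := Δ) M h ω
    simp only [mem_ofPred_eq] at hω ⊢
    rw [abs_sub_comm]
    exact le_trans (by linarith) (le_abs_self _)
  rw [Real.norm_of_nonneg measureReal_nonneg, Real.norm_of_nonneg (by positivity)]
  calc _ ≤ _ := measureReal_mono hsub
    _ ≤ (1 + 3 * c) * h * M / (ε * (c * h * Real.log h)) ^ 2 :=
        pareto_truncSum_deviation_le hmeas hindep hident hpareto hc M h (by positivity)
    _ ≤ (1 + 3 * c) * h * (2 * (h * Real.log h)) / (ε * (c * h * Real.log h)) ^ 2 := by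
        gcongr
    _ = 2 * (1 + 3 * c) / (ε * c) ^ 2 * (Real.log h)⁻¹ := by
        field_simp

theorem pareto_sum_upper_deviation_isBigO {ε : ℝ} (hε : 0 < ε) :
    (fun h : ℕ => μ.real {ω | (1 + ε) * (c * h * Real.log h)
      < ((∑ i ∈ Finset.range h, Δ i ω : ℕ) : ℝ)}) =O[atTop] fun h => (Real.log h)⁻¹ := by
  refine IsBigO.of_bound (c + 8 * (1 + 3 * c) / (ε * c) ^ 2) ?_
  filter_upwards [eventually_one_le_log_natCast,
    pareto_integral_min_ceil_le (hmeas 0) hpareto hc (half_pos hε)]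
    with h hlog hmean
  obtain ⟨hM₁, hM₂⟩ := le_natCeil_mul_log_le hlog
  have hh : (0 : ℝ) < h := zero_lt_one.trans_le (one_le_natCast_of_one_le_log hlog)
  set M := ⌈(h : ℝ) * Real.log h⌉₊
  set m := ∫ ω, ((min (Δ 0 ω) M : ℕ) : ℝ) ∂μ
  set bad := ⋃ i ∈ Finset.range h, {ω | M < Δ i ω}
  have hsub : {ω | (1 + ε) * (c * h * Real.log h) < ((∑ i ∈ Finset.range h, Δ i ω : ℕ) : ℝ)}
      ⊆ bad ∪ {ω | ε / 2 * (c * h * Real.log h) ≤ |truncSum Δ M h ω - h * m|} := by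
    intro ω hω
    by_cases hb : ω ∈ bad
    · exact Or.inl hb
    right
    have hgood : ∀ i < h, Δ i ω ≤ M := fun i hi =>
      not_lt.1 fun hlt => hb (mem_biUnion (Finset.mem_range.2 hi) hlt)
    simp only [mem_ofPred_eq] at hω ⊢
    rw [← truncSum_eq hgood] at hω
    exact le_trans (by linarith) (le_abs_self _)
  have hbad : μ.real bad ≤ c * (Real.log h)⁻¹ := by
    have hsame (i : ℕ) : μ.real {ω | M < Δ i ω} = μ.real {ω | M < Δ 0 ω} := by
      simp only [measureReal_def]
      exact congrArg _ ((hident i).measure_mem_eq measurableSet_Ioi)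
    have hM : 1 ≤ M := by
      have := one_le_natCast_of_one_le_log hlog
      exact_mod_cast (by nlinarith : (1 : ℝ) ≤ M)
    calc μ.real bad ≤ ∑ i ∈ Finset.range h, μ.real {ω | M < Δ i ω} :=
          measureReal_biUnion_finset_le _ _
      _ = h * μ.real {ω | M < Δ 0 ω} := by simp [hsame]
      _ ≤ h * (c / M) := by gcongr; exact pareto_tail_le (hmeas 0) hpareto hc.le hM
      _ ≤ h * (c / (h * Real.log h)) := by gcongr
      _ = c * (Real.log h)⁻¹ := by field_simp
  rw [Real.norm_of_nonneg measureReal_nonneg, Real.norm_of_nonneg (by positivity)]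
  calc _ ≤ μ.real bad
          + μ.real {ω | ε / 2 * (c * h * Real.log h) ≤ |truncSum Δ M h ω - h * m|} :=
        (measureReal_mono hsub).trans (measureReal_union_le _ _)
    _ ≤ c * (Real.log h)⁻¹
          + (1 + 3 * c) * h * (2 * (h * Real.log h)) / (ε / 2 * (c * h * Real.log h)) ^ 2 := by
        gcongr
        refine (pareto_truncSum_deviation_le hmeas hindep hident hpareto hc M h
          (by positivity)).trans ?_
        gcongr
    _ = (c + 8 * (1 + 3 * c) / (ε * c) ^ 2) * (Real.log h)⁻¹ := by
        field_simp
        ring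


theorem pareto_integral_sum_rpow_isEquivalent (hpos : ∀ i ω, 0 < Δ i ω) {β : ℝ}
    (hβ₀ : -1 < β) (hβ₁ : β ≤ 0) :
    (fun h : ℕ => ∫ ω, ((∑ i ∈ Finset.range h, Δ i ω : ℕ) : ℝ) ^ β ∂μ)
      ~[atTop] fun h : ℕ => (c * h * Real.log h) ^ β := by
  have hlogInv : (fun h : ℕ => (Real.log h)⁻¹) =o[atTop]
      fun h : ℕ => (c * h * Real.log h / h) ^ β := by
    refine ((isLittleO_inv_mul_rpow hβ₀ hc).comp_tendsto
      (Real.tendsto_log_atTop.comp tendsto_natCast_atTop_atTop)).congr' .rfl ?_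
    filter_upwards [eventually_gt_atTop 0] with h hh
    rw [Function.comp_apply, Function.comp_apply, mul_right_comm, mul_div_assoc,
      div_self (by positivity), mul_one]
  refine isEquivalent_integral_rpow_of_concentration (b := fun h => (h : ℝ)) hβ₁
    (fun h => measurable_from_nat.comp (Finset.measurable_sum _ fun i _ => hmeas i)) ?_
    (fun h ω => Nat.cast_le.2 (le_sum_range_of_pos hpos h ω)) ?_
    (fun ε hε => (pareto_sum_lower_deviation_isBigO hmeas hindep hident hpareto hc
      hε).trans_isLittleO hlogInv)
    (fun ε hε => (pareto_sum_upper_deviation_isBigO hmeas hindep hident hpareto hc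
      hε).trans_tendsto
        (tendsto_inv_atTop_zero.comp (Real.tendsto_log_atTop.comp tendsto_natCast_atTop_atTop)))
  · filter_upwards [eventually_gt_atTop 0] with h hh
    exact_mod_cast hh
  · filter_upwards [eventually_one_le_log_natCast] with h hlog
    have := one_le_natCast_of_one_le_log hlog
    exact mul_pos (mul_pos hc (by linarith)) (by linarith)

end ParetoSums


/-- Suppose `σ_X(h) ∼ C̃_d h^{2d-1}` (`0 < d < 1/2`) and the i.i.d.
inter-arrival times have the discrete Pareto distribution `P(Δ = k) = k⁻²/ζ(2)`,
`k = 1, 2, …`, with `ζ(2) = π²/6` (the case `α = 1`). Then the autocovariance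
`σ_Y(h) = E[σ_X(T_h)]` of the sampled process satisfies
`σ_Y(h) ∼ C̃_d (6/π²)^{2d-1} h^{2d-1} (log h)^{2d-1}` as `h → ∞`. -/
theorem stmt10 {Ω : Type*} [MeasureSpace Ω] [IsProbabilityMeasure (ℙ : Measure Ω)]
    (d : ℝ) (hd0 : 0 < d) (hd1 : d < 1/2) (Cd : ℝ) (hCd : 0 < Cd)
    (σX : ℝ → ℝ)
    (hσX : σX ~[atTop] fun h : ℝ => Cd * h ^ (2*d - 1))
    (Δ : ℕ → Ω → ℕ) (hmeas : ∀ i, Measurable (Δ i))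
    (hindep : iIndepFun Δ ℙ)
    (hident : ∀ i, IdentDistrib (Δ i) (Δ 0) ℙ ℙ)
    (hpos : ∀ i ω, 0 < Δ i ω)
    (hpareto : ∀ k : ℕ, 1 ≤ k →
      (ℙ {ω | Δ 0 ω = k}).toReal = (k : ℝ) ^ (-(2:ℝ)) / (Real.pi ^ 2 / 6))
    (T : ℕ → Ω → ℕ) (hT : ∀ k ω, T k ω = ∑ i ∈ Finset.range k, Δ i ω)
    (σY : ℕ → ℝ) (hσY : ∀ h : ℕ, σY h = ∫ ω, σX (T h ω) ∂ℙ) :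
    σY ~[atTop] fun h : ℕ =>
      Cd * (6 / Real.pi ^ 2) ^ (2*d - 1) * (h : ℝ) ^ (2*d - 1)
        * Real.log h ^ (2*d - 1) := by
  obtain rfl : T = fun h ω => ∑ i ∈ Finset.range h, Δ i ω := funext₂ hT
  set β := 2 * d - 1
  set c := 6 / Real.pi ^ 2 with hc_def
  have hc : 0 < c := by positivity
  have hpareto' (k : ℕ) (hk : 1 ≤ k) : (ℙ : Measure Ω).real {ω | Δ 0 ω = k} = c / k ^ 2 := by
    rw [measureReal_def, hpareto k hk, Real.rpow_neg k.cast_nonneg, Real.rpow_two, hc_def]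
    field_simp
  have hmoment := pareto_integral_sum_rpow_isEquivalent hmeas hindep hident hpareto' hc hpos
    (β := β) (by linarith) (by linarith)
  have htransfer : σY ~[atTop] fun h =>
      ∫ ω, Cd * ((∑ i ∈ Finset.range h, Δ i ω : ℕ) : ℝ) ^ β ∂ℙ := by
    refine (isEquivalent_integral_comp_of_isEquivalent hσX ?_
      (fun h => Finset.measurable_sum _ fun i _ => hmeas i) (le_sum_range_of_pos hpos)
      ?_).congr_left (Eventually.of_forall fun h => (hσY h).symm)
    · filter_upwards [eventually_ge_atTop 0] with x hx
      positivity
    · filter_upwards [eventually_ge_atTop 1] with h hh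
      exact (integrable_rpow_of_le (measurable_from_nat.comp
        (Finset.measurable_sum _ fun i _ => hmeas i)) (b := h) (by positivity)
        (fun ω => Nat.cast_le.2 (le_sum_range_of_pos hpos h ω)) (by linarith)).const_mul Cd
  simp_rw [integral_const_mul] at htransfer
  refine htransfer.trans (((IsEquivalent.refl (u := fun _ : ℕ => Cd)).mul hmoment).congr_right ?_)
  filter_upwards [eventually_ge_atTop 1] with h hh
  have hlog : 0 ≤ Real.log h := Real.log_nonneg (by exact_mod_cast hh)
  rw [Pi.mul_apply, Real.mul_rpow (by positivity) hlog, Real.mul_rpow hc.le (by positivity)]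
  ring
end

section
/- With d_{n,j} = Σ_{k=1}^n a_{T_k − j} (where a_u = 0 for u < 0) and d_n² = Σ_{j∈ℤ} d_{n,j}², one has sup_{j∈ℤ} ( d_{n,j}² / d_n² ) → 0 in probability as n → ∞. -/
/-!
The argument is deterministic: it works for every strictly increasing sequence of sampling
times, so the probabilities in question are eventually `0`.

Fix `i₀` with `a_u ≍ u ^ (d - 1)` for `u ≥ i₀`, and split `d_{n,j}` into the tail `P_j` over the
sample points with `T_k - j ≥ i₀`, where all terms are positive, and a head of at most `i₀`
bounded terms. Lowering `j` by `m` multiplies the terms with `T_k - j ≥ m` by at least a fixed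
factor (since `(u + m) ^ (d - 1) ≥ (2u) ^ (d - 1)`), and the remaining terms add up to at most
`a_{i₀} + ⋯ + a_{m-1}`. So once `P_j` is large, `d_{n,j-m} ≳ P_j` for every `m ≤ M`, which gives
`d_n² ≳ M P_j²`. Therefore `P_j² = o(d_n²)` uniformly in `j` and in the sampling times.

It then remains to see that `d_n² → ∞` uniformly. Call a sample point a run start if no earlier
sample point lies within `i₀` below it. At `j = T_k - i₀` for a run start `T_k`, every term of
`d_{n,j}` is nonnegative. So either there are many run starts, each contributing `a_{i₀}²`, or
by pigeonhole some run holds `m ≥ n / #starts` points spaced at most `i₀` apart, and then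
`d_{n,j} ≳ m · (m i₀) ^ (d - 1) ≍ m ^ d`.
-/

open MeasureTheory ProbabilityTheory Filter Topology Asymptotics

structure IsPowerLawKernel (f : ℤ → ℝ) (d c C : ℝ) (i₀ : ℕ) : Prop where
  eq_zero_of_neg : ∀ u < 0, f u = 0
  one_le : 1 ≤ i₀
  pos : 0 < c
  lower : ∀ u : ℤ, i₀ ≤ u → c * (u : ℝ) ^ (d - 1) ≤ f u
  upper : ∀ u : ℤ, i₀ ≤ u → f u ≤ C * (u : ℝ) ^ (d - 1)

/-- With `s = {T_1, …, T_n}` and `f = a`, this is the paper's `d_{n,j}`. -/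
def shiftSum (f : ℤ → ℝ) (s : Finset ℤ) (j : ℤ) : ℝ := ∑ x ∈ s, f (x - j)

def tailSum (f : ℤ → ℝ) (i₀ : ℕ) (s : Finset ℤ) (j : ℤ) : ℝ :=
  ∑ x ∈ s with (i₀ : ℤ) ≤ x - j, f (x - j)

/-- Only the indices `l ≥ 1` count: `t 0` is not a sample point. -/
def IsRunStart (t : ℕ → ℤ) (g k : ℕ) : Prop := ∀ l, 1 ≤ l → l < k → t l + g < t k

namespace IsPowerLawKernel

variable {f : ℤ → ℝ} {d c C : ℝ} {i₀ : ℕ}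

lemma coe_pos (hf : IsPowerLawKernel f d c C i₀) {u : ℤ} (hu : i₀ ≤ u) : (0 : ℝ) < u := by
  have := hf.one_le
  exact_mod_cast (show (0 : ℤ) < u by omega)

lemma pos_of_le (hf : IsPowerLawKernel f d c C i₀) {u : ℤ} (hu : i₀ ≤ u) : 0 < f u :=
  (mul_pos hf.pos (Real.rpow_pos_of_pos (hf.coe_pos hu) _)).trans_le (hf.lower u hu)

lemma const_le (hf : IsPowerLawKernel f d c C i₀) : c ≤ C :=
  le_of_mul_le_mul_right ((hf.lower _ le_rfl).trans (hf.upper _ le_rfl))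
    (Real.rpow_pos_of_pos (hf.coe_pos le_rfl) _)

lemma const_pos (hf : IsPowerLawKernel f d c C i₀) : 0 < C := hf.pos.trans_le hf.const_le

lemma mul_le_mul_add (hf : IsPowerLawKernel f d c C i₀) (hd₀ : 0 ≤ d) (hd₁ : d ≤ 1)
    {u m : ℤ} (hu : i₀ ≤ u) (hm₀ : 0 ≤ m) (hmu : m ≤ u) :
    c * f u ≤ 2 * C * f (u + m) := by
  have hu₀ := hf.coe_pos hu
  have hx := Real.rpow_pos_of_pos hu₀ (d - 1)
  have h2u : (2 * u : ℝ) ^ (d - 1) ≤ ((u + m : ℤ) : ℝ) ^ (d - 1) :=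
    Real.rpow_le_rpow_of_nonpos (hf.coe_pos (by omega))
      (by push_cast; exact_mod_cast (by omega : u + m ≤ 2 * u)) (by linarith)
  have h2 : (1 / 2 : ℝ) ≤ 2 ^ (d - 1) := by
    rw [show (1 / 2 : ℝ) = 2 ^ (-1 : ℝ) by norm_num]
    exact Real.rpow_le_rpow_of_exponent_le (by norm_num) (by linarith)
  have hlow : c / 2 * (u : ℝ) ^ (d - 1) ≤ f (u + m) :=
    calc c / 2 * (u : ℝ) ^ (d - 1) ≤ c * (2 ^ (d - 1) * (u : ℝ) ^ (d - 1)) := by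
          nlinarith [mul_nonneg (mul_pos hf.pos hx).le (sub_nonneg.2 h2)]
      _ = c * (2 * u : ℝ) ^ (d - 1) := by rw [Real.mul_rpow (by norm_num) hu₀.le]
      _ ≤ c * ((u + m : ℤ) : ℝ) ^ (d - 1) := mul_le_mul_of_nonneg_left h2u hf.pos.le
      _ ≤ f (u + m) := hf.lower _ (by omega)
  calc c * f u ≤ c * (C * (u : ℝ) ^ (d - 1)) :=
        mul_le_mul_of_nonneg_left (hf.upper u hu) hf.pos.le
    _ = 2 * C * (c / 2 * (u : ℝ) ^ (d - 1)) := by ring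
    _ ≤ 2 * C * f (u + m) := mul_le_mul_of_nonneg_left hlow (by linarith [hf.const_pos])

end IsPowerLawKernel

lemma isPowerLawKernel_of_isEquivalent {f : ℤ → ℝ} {d C : ℝ} (hC : 0 < C)
    (hneg : ∀ u < 0, f u = 0)
    (hf : (fun i : ℕ => f i) ~[atTop] fun i : ℕ => C * (i : ℝ) ^ (d - 1)) :
    ∃ i₀, IsPowerLawKernel f d (C / 2) (2 * C) i₀ := by
  obtain ⟨i₁, hi₁⟩ :=
    eventually_atTop.1 (hf.isLittleO.def (by norm_num : (0 : ℝ) < 1 / 2))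
  have hclose (u : ℤ) (hu : ((max i₁ 1 : ℕ) : ℤ) ≤ u) :
      |f u - C * (u : ℝ) ^ (d - 1)| ≤ 1 / 2 * (C * (u : ℝ) ^ (d - 1)) ∧
        0 < C * (u : ℝ) ^ (d - 1) := by
    lift u to ℕ using (by omega)
    have hu₀ : (0 : ℝ) < u := by exact_mod_cast (show 0 < u by omega)
    have hpos := mul_pos hC (Real.rpow_pos_of_pos hu₀ (d - 1))
    have := hi₁ u (by omega)
    simp only [Pi.sub_apply, Real.norm_eq_abs, abs_of_pos hpos] at this
    exact ⟨this, hpos⟩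
  refine ⟨max i₁ 1, hneg, le_max_right _ _, half_pos hC, fun u hu => ?_, fun u hu => ?_⟩ <;>
  · obtain ⟨h, hpos⟩ := hclose u hu
    have := abs_le.1 h
    nlinarith

open Finset

section Tail

variable {f : ℤ → ℝ} {s : Finset ℤ} {i₀ : ℕ}

lemma abs_shiftSum_sub_tailSum_le (hf : ∀ u < 0, f u = 0) (j : ℤ) :
    |shiftSum f s j - tailSum f i₀ s j| ≤ ∑ u ∈ Ico 0 (i₀ : ℤ), |f u| := by
  set head := s.filter fun x => ¬ (i₀ : ℤ) ≤ x - j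
  have hsplit : shiftSum f s j - tailSum f i₀ s j = ∑ x ∈ head, f (x - j) := by
    rw [shiftSum, tailSum, ← sum_filter_add_sum_filter_not s fun x => (i₀ : ℤ) ≤ x - j]
    ring
  have hvanish : ∑ x ∈ head with j ≤ x, |f (x - j)| = ∑ x ∈ head, |f (x - j)| :=
    sum_subset (filter_subset _ _) fun x _ hx => by
      simp only [mem_filter, not_and, not_le] at hx
      rw [hf _ (by grind), abs_zero]
  rw [hsplit]
  calc |∑ x ∈ head, f (x - j)| ≤ ∑ x ∈ head, |f (x - j)| := abs_sum_le_sum_abs _ _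
    _ = ∑ x ∈ head with j ≤ x, |f (x - j)| := hvanish.symm
    _ ≤ ∑ x ∈ Ico (0 + j) (i₀ + j), |f (x - j)| :=
        sum_le_sum_of_subset_of_nonneg
          (fun x hx => by simp only [head, mem_filter, mem_Ico] at hx ⊢; omega)
          fun _ _ _ => abs_nonneg _
    _ = ∑ u ∈ Ico 0 (i₀ : ℤ), |f u| := sum_Ico_add_right_sub_eq (f := fun u => |f u|) _ _ _

variable {d c C : ℝ}

lemma tailSum_nonneg (hf : IsPowerLawKernel f d c C i₀) (j : ℤ) : 0 ≤ tailSum f i₀ s j :=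
  sum_nonneg fun _ hx => (hf.pos_of_le (mem_filter.1 hx).2).le

lemma mul_tailSum_le (hf : IsPowerLawKernel f d c C i₀) (hd₀ : 0 ≤ d) (hd₁ : d ≤ 1)
    {i j : ℤ} (hij : i ≤ j) :
    c * tailSum f i₀ s j ≤
      2 * C * tailSum f i₀ s i + c * ∑ u ∈ Ico (i₀ : ℤ) (j - i), f u := by
  set A := s.filter fun x => (i₀ : ℤ) ≤ x - j
  have hbig : c * ∑ x ∈ A with j - i ≤ x - j, f (x - j) ≤ 2 * C * tailSum f i₀ s i :=
    calc c * ∑ x ∈ A with j - i ≤ x - j, f (x - j)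
        ≤ 2 * C * ∑ x ∈ A with j - i ≤ x - j, f (x - i) := by
          rw [mul_sum, mul_sum]
          refine sum_le_sum fun x hx => ?_
          simp only [A, mem_filter] at hx
          simpa using hf.mul_le_mul_add hd₀ hd₁ hx.1.2 (sub_nonneg.2 hij) hx.2
      _ ≤ 2 * C * tailSum f i₀ s i := by
          refine mul_le_mul_of_nonneg_left (sum_le_sum_of_subset_of_nonneg ?_ ?_) ?_
          · intro x hx
            simp only [A, mem_filter] at hx ⊢
            exact ⟨hx.1.1, by omega⟩
          · exact fun x hx _ => (hf.pos_of_le (mem_filter.1 hx).2).le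
          · linarith [hf.const_pos]
  have hsmall :
      ∑ x ∈ A with ¬ j - i ≤ x - j, f (x - j) ≤ ∑ u ∈ Ico (i₀ : ℤ) (j - i), f u :=
    calc ∑ x ∈ A with ¬ j - i ≤ x - j, f (x - j)
        ≤ ∑ x ∈ Ico (i₀ + j) (j - i + j), f (x - j) :=
          sum_le_sum_of_subset_of_nonneg
            (fun x hx => by simp only [A, mem_filter, mem_Ico] at hx ⊢; omega)
            fun x hx _ => (hf.pos_of_le (by simp only [mem_Ico] at hx; omega)).le
      _ = ∑ u ∈ Ico (i₀ : ℤ) (j - i), f u := sum_Ico_add_right_sub_eq _ _ _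
  rw [tailSum, ← sum_filter_add_sum_filter_not A (fun x => j - i ≤ x - j), mul_add]
  linarith [mul_le_mul_of_nonneg_left hsmall hf.pos.le]

lemma mul_tailSum_sub_le_shiftSum (hf : IsPowerLawKernel f d c C i₀) (hd₀ : 0 ≤ d)
    (hd₁ : d ≤ 1) {i j : ℤ} (hij : i ≤ j) :
    c / (2 * C) * (tailSum f i₀ s j - ∑ u ∈ Ico (i₀ : ℤ) (j - i), f u) -
      ∑ u ∈ Ico 0 (i₀ : ℤ), |f u| ≤ shiftSum f s i := by
  have hhead := abs_le.1 (abs_shiftSum_sub_tailSum_le hf.eq_zero_of_neg (s := s) (i₀ := i₀) i)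
  have htail : c / (2 * C) * (tailSum f i₀ s j - ∑ u ∈ Ico (i₀ : ℤ) (j - i), f u) ≤
      tailSum f i₀ s i := by
    rw [div_mul_eq_mul_div, div_le_iff₀ (by linarith [hf.const_pos])]
    linarith [mul_tailSum_le hf hd₀ hd₁ (s := s) hij]
  linarith

end Tail

section Energy

variable {f : ℤ → ℝ} {d c C : ℝ} {i₀ : ℕ}

lemma summable_shiftSum_sq (hf : Summable fun u => f u ^ 2) (s : Finset ℤ) :
    Summable fun j => shiftSum f s j ^ 2 := by
  have hshift (x : ℤ) : Summable fun j => f (x - j) ^ 2 := (Equiv.subLeft x).summable_iff.2 hf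
  refine .of_nonneg_of_le (fun _ => sq_nonneg _) (fun j => sq_sum_le_card_mul_sum_sq)
    ((summable_sum (s := s) fun x _ => hshift x).mul_left (#s : ℝ))

lemma card_mul_sq_le_tsum (hf : Summable fun u => f u ^ 2) {s J : Finset ℤ} {b : ℝ}
    (hb : 0 ≤ b) (hJ : ∀ i ∈ J, b ≤ shiftSum f s i) :
    #J * b ^ 2 ≤ ∑' i, shiftSum f s i ^ 2 := by
  rw [← nsmul_eq_mul]
  exact (card_nsmul_le_sum J (fun i => shiftSum f s i ^ 2) _
    fun i hi => pow_le_pow_left₀ hb (hJ i hi) 2).trans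
      ((summable_shiftSum_sq hf s).sum_le_tsum _ fun _ _ => sq_nonneg _)

lemma exists_tailSum_sq_le (hf : IsPowerLawKernel f d c C i₀) (hd₀ : 0 ≤ d) (hd₁ : d ≤ 1)
    (hf₂ : Summable fun u => f u ^ 2) {ε : ℝ} (hε : 0 < ε) :
    ∃ K, ∀ s j, tailSum f i₀ s j ^ 2 ≤ K + ε * ∑' i, shiftSum f s i ^ 2 := by
  set ρ := c / (2 * C)
  have hρ : 0 < ρ := div_pos hf.pos (by linarith [hf.const_pos])
  set H := ∑ u ∈ Ico 0 (i₀ : ℤ), |f u|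
  obtain ⟨M, hM⟩ := exists_nat_ge (1 / (ε * (ρ / 4) ^ 2))
  set F := ∑ u ∈ Ico (i₀ : ℤ) M, f u
  set P₁ := max (2 * F) (4 * H / ρ)
  refine ⟨P₁ ^ 2, fun s j => ?_⟩
  set P := tailSum f i₀ s j
  set τ := ∑' i, shiftSum f s i ^ 2
  have hP : 0 ≤ P := tailSum_nonneg hf j
  have hτ : 0 ≤ τ := tsum_nonneg fun _ => sq_nonneg _
  rcases le_or_gt P P₁ with hPP₁ | hPP₁
  · nlinarith
  have hlow (i) (hi : i ∈ Icc (j - M) j) : ρ * P / 4 ≤ shiftSum f s i := by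
    obtain ⟨hjM, hij⟩ := mem_Icc.1 hi
    have hF : ∑ u ∈ Ico (i₀ : ℤ) (j - i), f u ≤ F :=
      sum_le_sum_of_subset_of_nonneg (Ico_subset_Ico le_rfl (by omega))
        fun u hu _ => (hf.pos_of_le (mem_Ico.1 hu).1).le
    have hH : H ≤ ρ * P / 4 := by
      linarith [(div_lt_iff₀ hρ).1 ((le_max_right _ _).trans_lt hPP₁)]
    have hF₁ : 2 * F ≤ P := (le_max_left _ _).trans hPP₁.le
    nlinarith [mul_tailSum_sub_le_shiftSum hf hd₀ hd₁ (s := s) hij]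
  have hsum : (M + 1 : ℝ) * (ρ * P / 4) ^ 2 ≤ τ := by
    have := card_mul_sq_le_tsum hf₂ (by positivity) hlow
    rwa [Int.card_Icc, show (j + 1 - (j - M)).toNat = M + 1 by omega, Nat.cast_add_one] at this
  have hεM : 1 ≤ ε * (ρ / 4) ^ 2 * (M + 1) := by
    nlinarith [(div_le_iff₀ (by positivity)).1 hM]
  calc P ^ 2 ≤ ε * (ρ / 4) ^ 2 * (M + 1) * P ^ 2 := le_mul_of_one_le_left (sq_nonneg _) hεM
    _ = ε * ((M + 1 : ℝ) * (ρ * P / 4) ^ 2) := by ring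
    _ ≤ P₁ ^ 2 + ε * τ := by nlinarith

end Energy

section Runs

lemma exists_long_run (p : ℕ → Prop) [DecidablePred p] {n : ℕ} (hn : 1 ≤ n) (hp : p 1) :
    ∃ k ∈ Icc 1 n, p k ∧ k + n / #{l ∈ Icc 1 n | p l} ≤ n + 1 ∧
      ∀ l, k < l → l < k + n / #{l ∈ Icc 1 n | p l} → ¬ p l := by
  set S := (Icc 1 n).filter p
  set m := n / #S
  have hS : 1 ∈ S := mem_filter.2 ⟨mem_Icc.2 ⟨le_rfl, hn⟩, hp⟩
  have hm : 1 ≤ m := Nat.div_pos ((card_filter_le _ _).trans (by simp)) (card_pos.2 ⟨1, hS⟩)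
  -- `Nat.findGreatest p k` is the start of the run containing `k`
  have hmaps (k) (hk : k ∈ Icc 1 n) : Nat.findGreatest p k ∈ S := by
    obtain ⟨hk₁, hkn⟩ := mem_Icc.1 hk
    exact mem_filter.2 ⟨mem_Icc.2 ⟨Nat.le_findGreatest hk₁ hp,
      (Nat.findGreatest_le k).trans hkn⟩, Nat.findGreatest_spec hk₁ hp⟩
  obtain ⟨k, hkS, hfiber⟩ := exists_le_card_fiber_of_mul_le_card_of_maps_to (n := m) hmaps
    ⟨1, hS⟩ (by simpa [mul_comm] using Nat.div_mul_le_self n #S)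
  obtain ⟨k₁, hk₁, hkk₁⟩ :
      ∃ k₁ ∈ Icc 1 n, Nat.findGreatest p k₁ = k ∧ k + m ≤ k₁ + 1 := by
    by_contra! hnot
    have hsub : {x ∈ Icc 1 n | Nat.findGreatest p x = k} ⊆ Ico k (k + m - 1) := fun x hx => by
      obtain ⟨hx, hxk⟩ := mem_filter.1 hx
      have := hnot x hx hxk
      have := Nat.findGreatest_le (P := p) x
      simp only [mem_Ico]
      omega
    have := (card_le_card hsub).trans' hfiber
    simp only [Nat.card_Ico] at this
    omega
  refine ⟨k, (mem_filter.1 hkS).1, (mem_filter.1 hkS).2, by grind, fun l hkl hlm => ?_⟩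
  exact Nat.findGreatest_is_greatest (hkk₁.1 ▸ hkl) (by omega)

lemma le_add_mul_of_not_isRunStart {t : ℕ → ℤ} (ht : Monotone t) {g k m : ℕ}
    (hrun : ∀ l, k < l → l < k + m → ¬ IsRunStart t g l) {u : ℕ} (hu : u < m) :
    t (k + u) ≤ t k + u * g := by
  induction u with
  | zero => simp
  | succ u ih =>
    obtain ⟨l, -, hlu, hl⟩ :
        ∃ l, 1 ≤ l ∧ l < k + (u + 1) ∧ t (k + (u + 1)) ≤ t l + g := by
      simpa [IsRunStart] using hrun (k + (u + 1)) (by omega) (by omega)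
    have := ht (show l ≤ k + u by omega)
    push_cast
    linarith [ih (by omega)]

variable {f : ℤ → ℝ} {d c C : ℝ} {i₀ : ℕ} {t : ℕ → ℤ}

lemma shiftSum_image (ht : StrictMono t) (A : Finset ℕ) (j : ℤ) :
    shiftSum f (A.image t) j = ∑ l ∈ A, f (t l - j) :=
  sum_image fun _ _ _ _ h => ht.injective h

lemma sum_le_shiftSum_of_isRunStart (hf : IsPowerLawKernel f d c C i₀) (ht : StrictMono t)
    {n k : ℕ} (hk : IsRunStart t i₀ k) {R : Finset ℕ} (hR : R ⊆ Icc 1 n) :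
    ∑ l ∈ R, f (t l - (t k - i₀)) ≤ shiftSum f ((Icc 1 n).image t) (t k - i₀) := by
  rw [shiftSum_image ht]
  refine sum_le_sum_of_subset_of_nonneg hR fun l hl _ => ?_
  rcases lt_or_ge l k with hlk | hkl
  · rw [hf.eq_zero_of_neg _ (by linarith [hk l (mem_Icc.1 hl).1 hlk])]
  · exact (hf.pos_of_le (by linarith [ht.monotone hkl])).le

lemma card_mul_sq_le_tsum_of_isRunStart (hf : IsPowerLawKernel f d c C i₀)
    (hf₂ : Summable fun u => f u ^ 2) (ht : StrictMono t) {n : ℕ} {X : Finset ℕ}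
    (hX : X ⊆ Icc 1 n) (hstart : ∀ k ∈ X, IsRunStart t i₀ k) :
    #X * f i₀ ^ 2 ≤ ∑' j, shiftSum f ((Icc 1 n).image t) j ^ 2 := by
  have hinj : Set.InjOn (fun k => t k - (i₀ : ℤ)) X :=
    fun _ _ _ _ h => ht.injective (sub_left_inj.1 h)
  rw [← card_image_of_injOn hinj]
  refine card_mul_sq_le_tsum hf₂ (hf.pos_of_le (le_refl (i₀ : ℤ))).le fun j hj => ?_
  obtain ⟨k, hk, rfl⟩ := mem_image.1 hj
  simpa using sum_le_shiftSum_of_isRunStart hf ht (hstart k hk) (singleton_subset_iff.2 (hX hk))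

lemma mul_rpow_le_shiftSum_of_run (hf : IsPowerLawKernel f d c C i₀) (hd₀ : 0 < d)
    (hd₁ : d ≤ 1) (ht : StrictMono t) {n k m : ℕ} (hk : 1 ≤ k) (hkm : k + m ≤ n + 1)
    (hstart : IsRunStart t i₀ k) (hrun : ∀ l, k < l → l < k + m → ¬ IsRunStart t i₀ l) :
    c * (i₀ : ℝ) ^ (d - 1) * (m : ℝ) ^ d ≤ shiftSum f ((Icc 1 n).image t) (t k - i₀) := by
  refine le_trans ?_ (sum_le_shiftSum_of_isRunStart hf ht hstart
    (R := Ico k (k + m)) fun l hl => by simp only [mem_Ico, mem_Icc] at hl ⊢; omega)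
  rcases Nat.eq_zero_or_pos m with rfl | hm
  · simp [Real.zero_rpow hd₀.ne']
  have hi₀ : (0 : ℝ) < i₀ := by exact_mod_cast hf.one_le
  have hterm (u) (hu : u ∈ range m) :
      c * ((m : ℝ) * i₀) ^ (d - 1) ≤ f (t (k + u) - (t k - i₀)) := by
    have hu := mem_range.1 hu
    have hlo : (i₀ : ℤ) ≤ t (k + u) - (t k - i₀) := by
      linarith [ht.monotone (k.le_add_right u)]
    have hhi : t (k + u) - (t k - i₀) ≤ (m : ℤ) * i₀ := by
      have := le_add_mul_of_not_isRunStart ht.monotone hrun hu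
      have : (u : ℤ) + 1 ≤ m := by omega
      nlinarith
    refine le_trans (mul_le_mul_of_nonneg_left ?_ hf.pos.le) (hf.lower _ hlo)
    exact Real.rpow_le_rpow_of_nonpos (hf.coe_pos hlo) (by exact_mod_cast hhi) (by linarith)
  have hsum := card_nsmul_le_sum _ _ _ hterm
  rw [card_range, nsmul_eq_mul] at hsum
  rw [sum_Ico_eq_sum_range, Nat.add_sub_cancel_left]
  calc c * (i₀ : ℝ) ^ (d - 1) * (m : ℝ) ^ d = m * (c * ((m : ℝ) * i₀) ^ (d - 1)) := by
        have hm' : (0 : ℝ) < m := by exact_mod_cast hm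
        rw [Real.mul_rpow hm'.le hi₀.le, show (m : ℝ) ^ d = (m : ℝ) ^ (d - 1) * m by
          rw [← Real.rpow_add_one hm'.ne']; ring_nf]
        ring
    _ ≤ _ := hsum

lemma exists_le_tsum_shiftSum_sq (hf : IsPowerLawKernel f d c C i₀) (hd₀ : 0 < d)
    (hd₁ : d ≤ 1) (hf₂ : Summable fun u => f u ^ 2) (R : ℝ) :
    ∃ N, ∀ n ≥ N, ∀ t : ℕ → ℤ, StrictMono t →
      R ≤ ∑' j, shiftSum f ((Icc 1 n).image t) j ^ 2 := by
  classical
  have hq : 0 < f i₀ := hf.pos_of_le le_rfl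
  obtain ⟨A, hA⟩ := exists_nat_ge (R / f i₀ ^ 2)
  rw [div_le_iff₀ (by positivity)] at hA
  have hrun :
      Tendsto (fun m : ℕ => (c * (i₀ : ℝ) ^ (d - 1) * (m : ℝ) ^ d) ^ 2) atTop atTop :=
    (tendsto_pow_atTop two_ne_zero).comp <|
      ((tendsto_rpow_atTop hd₀).comp tendsto_natCast_atTop_atTop).const_mul_atTop
        (mul_pos hf.pos (Real.rpow_pos_of_pos (by exact_mod_cast hf.one_le) _))
  obtain ⟨M, hM⟩ := eventually_atTop.1 (hrun.eventually_ge_atTop R)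
  refine ⟨max 1 (M * A), fun n hn t ht => ?_⟩
  set X := (Icc 1 n).filter (IsRunStart t i₀)
  rcases le_or_gt A #X with hAX | hXA
  · calc R ≤ A * f i₀ ^ 2 := hA
      _ ≤ #X * f i₀ ^ 2 := by gcongr
      _ ≤ _ := card_mul_sq_le_tsum_of_isRunStart hf hf₂ ht (filter_subset _ _)
          fun k hk => (mem_filter.1 hk).2
  obtain ⟨k, hk, hstart, hkm, hrun⟩ :=
    exists_long_run (IsRunStart t i₀) (le_of_max_le_left hn) fun l _ h => absurd h (by omega)
  have hX₀ : 0 < #X := card_pos.2 ⟨k, mem_filter.2 ⟨hk, hstart⟩⟩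
  have hMX : M ≤ n / #X :=
    ((Nat.le_div_iff_mul_le (hX₀.trans hXA)).2 (le_of_max_le_right hn)).trans
      (Nat.div_le_div_left hXA.le hX₀)
  calc R ≤ (c * (i₀ : ℝ) ^ (d - 1) * ((n / #X : ℕ) : ℝ) ^ d) ^ 2 := hM _ hMX
    _ ≤ shiftSum f ((Icc 1 n).image t) (t k - i₀) ^ 2 :=
        pow_le_pow_left₀ (by have := hf.pos; positivity)
          (mul_rpow_le_shiftSum_of_run hf hd₀ hd₁ ht (mem_Icc.1 hk).1 hkm hstart hrun) 2
    _ ≤ _ := (summable_shiftSum_sq hf₂ _).le_tsum _ fun _ _ => sq_nonneg _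

lemma exists_forall_shiftSum_sq_le (hf : IsPowerLawKernel f d c C i₀) (hd₀ : 0 < d)
    (hd₁ : d ≤ 1) (hf₂ : Summable fun u => f u ^ 2) {η : ℝ} (hη : 0 < η) :
    ∃ N, ∀ n ≥ N, ∀ t : ℕ → ℤ, StrictMono t →
      0 < ∑' j, shiftSum f ((Icc 1 n).image t) j ^ 2 ∧
      ∀ j, shiftSum f ((Icc 1 n).image t) j ^ 2 ≤
        η * ∑' j, shiftSum f ((Icc 1 n).image t) j ^ 2 := by
  set H := ∑ u ∈ Ico 0 (i₀ : ℤ), |f u|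
  obtain ⟨K, hK⟩ := exists_tailSum_sq_le hf hd₀.le hd₁ hf₂ (ε := η / 4) (by positivity)
  obtain ⟨N, hN⟩ :=
    exists_le_tsum_shiftSum_sq hf hd₀ hd₁ hf₂ (max 1 (4 * (H ^ 2 + K) / η))
  refine ⟨N, fun n hn t ht => ?_⟩
  set s := (Icc 1 n).image t
  have hτ := hN n hn t ht
  have hτK : 4 * (H ^ 2 + K) ≤ η * ∑' j, shiftSum f s j ^ 2 :=
    (div_le_iff₀' hη).1 ((le_max_right _ _).trans hτ)
  refine ⟨zero_lt_one.trans_le ((le_max_left _ _).trans hτ), fun j => ?_⟩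
  have hhead := abs_le.1 (abs_shiftSum_sub_tailSum_le hf.eq_zero_of_neg (s := s) (i₀ := i₀) j)
  have hH := sq_le_sq' hhead.1 hhead.2
  nlinarith [hK s j, sq_nonneg (shiftSum f s j - 2 * tailSum f i₀ s j)]

end Runs

lemma strictMono_sum_range_of_pos {Δ : ℕ → ℕ} (hΔ : ∀ i, 0 < Δ i) :
    StrictMono fun k => ∑ i ∈ range k, Δ i :=
  strictMono_nat_of_lt_succ fun k => by rw [sum_range_succ]; linarith [hΔ k]

theorem stmt12_general {Ω : Type*} [MeasureSpace Ω]
    (a : ℕ → ℝ) (ha2 : Summable fun i => (a i) ^ 2)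
    (d : ℝ) (hd0 : 0 < d) (hd1 : d < 1/2) (Cd : ℝ) (hCd : 0 < Cd)
    (ha : (fun i : ℕ => a i) ~[atTop] fun i : ℕ => Cd * (i : ℝ) ^ (d - 1))
    (Δ : ℕ → Ω → ℕ)
    (hΔpos : ∀ i ω, 0 < Δ i ω)
    (T : ℕ → Ω → ℕ) (hT : ∀ k ω, T k ω = ∑ i ∈ Finset.range k, Δ i ω)
    (aZ : ℤ → ℝ) (haZ : ∀ u : ℤ, aZ u = if 0 ≤ u then a u.toNat else 0)
    (D : ℕ → ℤ → Ω → ℝ)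
    (hD : ∀ n j ω, D n j ω = ∑ k ∈ Finset.Icc 1 n, aZ ((T k ω : ℤ) - j)) :
    ∀ η : ℝ, 0 < η →
      Tendsto (fun n : ℕ =>
          ℙ {ω | η < ⨆ j : ℤ, (D n j ω) ^ 2 / ∑' j' : ℤ, (D n j' ω) ^ 2})
        atTop (𝓝 0) := by
  intro η hη
  have hneg (u : ℤ) (hu : u < 0) : aZ u = 0 := by simp [haZ, hu.not_ge]
  have hnat (i : ℕ) : aZ i = a i := by simp [haZ]
  obtain ⟨i₀, hker⟩ :=
    isPowerLawKernel_of_isEquivalent hCd hneg (by simpa only [hnat] using ha)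
  have hsq : Summable fun u => aZ u ^ 2 :=
    (Nat.cast_injective.summable_iff fun u hu => by
      rw [hneg u (not_le.1 fun h => hu ⟨u.toNat, Int.toNat_of_nonneg h⟩), sq, zero_mul]).1
      (by simpa only [Function.comp_def, hnat] using ha2)
  obtain ⟨N, hN⟩ := exists_forall_shiftSum_sq_le hker hd0 (by linarith) hsq hη
  refine tendsto_const_nhds.congr' (eventually_atTop.2 ⟨N, fun n hn => ?_⟩)
  suffices {ω | η < ⨆ j : ℤ, (D n j ω) ^ 2 / ∑' j' : ℤ, (D n j' ω) ^ 2} = ∅ by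
    simp [this]
  refine Set.eq_empty_of_forall_notMem fun ω (hω : η < _) => hω.not_ge ?_
  have ht : StrictMono fun k => (T k ω : ℤ) :=
    Nat.strictMono_cast.comp (by simpa only [hT] using strictMono_sum_range_of_pos (hΔpos · ω))
  obtain ⟨hτ, hle⟩ := hN n hn _ ht
  simp only [hD, ← shiftSum_image ht]
  exact ciSup_le fun j => (div_le_iff₀ hτ).2 (hle j)

/-- With `d_{n,j} = ∑_{k=1}^n a_{T_k - j}` (`a_u = 0` for `u < 0`) and
`d_n² = ∑_{j∈ℤ} d_{n,j}²`, one has `sup_{j∈ℤ} (d_{n,j}²/d_n²) → 0` in probability as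
`n → ∞`, where `a_i ∼ C_d i^{d-1}` (`0 < d < 1/2`, `∑ a_i² < ∞`) and `T_k = Δ_1 + ⋯ + Δ_k`
is a renewal process built from i.i.d. positive integer-valued random variables. -/
theorem stmt12 {Ω : Type*} [MeasureSpace Ω] [IsProbabilityMeasure (ℙ : Measure Ω)]
    (a : ℕ → ℝ) (ha2 : Summable fun i => (a i) ^ 2)
    (d : ℝ) (hd0 : 0 < d) (hd1 : d < 1/2) (Cd : ℝ) (hCd : 0 < Cd)
    (ha : (fun i : ℕ => a i) ~[atTop] fun i : ℕ => Cd * (i : ℝ) ^ (d - 1))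
    (Δ : ℕ → Ω → ℕ) (hΔmeas : ∀ i, Measurable (Δ i))
    (hΔindep : iIndepFun Δ ℙ)
    (hΔident : ∀ i, IdentDistrib (Δ i) (Δ 0) ℙ ℙ)
    (hΔpos : ∀ i ω, 0 < Δ i ω)
    (T : ℕ → Ω → ℕ) (hT : ∀ k ω, T k ω = ∑ i ∈ Finset.range k, Δ i ω)
    (aZ : ℤ → ℝ) (haZ : ∀ u : ℤ, aZ u = if 0 ≤ u then a u.toNat else 0)
    (D : ℕ → ℤ → Ω → ℝ)
    (hD : ∀ n j ω, D n j ω = ∑ k ∈ Finset.Icc 1 n, aZ ((T k ω : ℤ) - j)) :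
    ∀ η : ℝ, 0 < η →
      Tendsto (fun n : ℕ =>
          ℙ {ω | η < ⨆ j : ℤ, (D n j ω) ^ 2 / ∑' j' : ℤ, (D n j' ω) ^ 2})
        atTop (𝓝 0) :=
  stmt12_general a ha2 d hd0 hd1 Cd hCd ha Δ hΔpos T hT aZ haZ D hD
end
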